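/- arXiv:1602.05457 — 5 statements merged into one kernel-verified Lean document; each statement's English description precedes it below -/
import Mathlib

section
/- Let G be a finite simple connected graph with modularity matrix M = A - (1/vol V) d dᵀ. The rightmost (largest) eigenvalue of M is nonnegative, and it is zero if and only if G is a complete multipartite graph. -/
/-!
Since `M 𝟙 = 0`, the constant vector is an eigenvector for `0`, so `λ ≥ 0`; as `M` is symmetric,
`λ = 0` exactly when `M` is negative semidefinite, and `M 𝟙 = 0` lets us test this on `x ⊥ 𝟙` only.
If `G` is complete multipartite with parts `V_c`, then `A = J - B` with `B` the block matrix of the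
parts, so `xᵀ M x = -∑_c (∑_{V_c} x)² - (dᵀx)² / vol ≤ 0` for `x ⊥ 𝟙`. Otherwise some `w₁ ~ w₂` are
both non-adjacent to a vertex `v`, which has `d_v > 0` by connectivity, and
`x = d_v (e_{w₁} + e_{w₂}) - (d_{w₁} + d_{w₂}) e_v` has `dᵀx = 0` and `xᵀ M x = 2 d_v² > 0`.
-/

open Matrix Finset

namespace Matrix

variable {ι : Type*} [Fintype ι]

def rowSums (A : Matrix ι ι ℝ) (i : ι) : ℝ := ∑ j, A i j

noncomputable def modularityMatrix (A : Matrix ι ι ℝ) : Matrix ι ι ℝ :=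
  A - (1 / ∑ i, rowSums A i) • vecMulVec (rowSums A) (rowSums A)

theorem modularityMatrix_mulVec (A : Matrix ι ι ℝ) (x : ι → ℝ) :
    modularityMatrix A *ᵥ x = A *ᵥ x - ((rowSums A ⬝ᵥ x) / ∑ i, rowSums A i) • rowSums A := by
  ext i
  simp only [modularityMatrix, sub_mulVec, smul_mulVec, Pi.sub_apply, Pi.smul_apply,
    smul_eq_mul, vecMulVec_mulVec, op_smul_eq_mul]
  ring

theorem dotProduct_modularityMatrix_mulVec (A : Matrix ι ι ℝ) (x : ι → ℝ) :
    x ⬝ᵥ modularityMatrix A *ᵥ x = x ⬝ᵥ A *ᵥ x - (rowSums A ⬝ᵥ x) ^ 2 / ∑ i, rowSums A i := by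
  rw [modularityMatrix_mulVec, dotProduct_sub, dotProduct_smul, smul_eq_mul,
    dotProduct_comm x (rowSums A)]
  ring

theorem rowSums_nonneg {A : Matrix ι ι ℝ} (hA : ∀ i j, 0 ≤ A i j) (i : ι) : 0 ≤ rowSums A i :=
  sum_nonneg fun j _ => hA i j

theorem modularityMatrix_mulVec_one {A : Matrix ι ι ℝ} (hA : ∀ i j, 0 ≤ A i j) :
    modularityMatrix A *ᵥ 1 = 0 := by
  have hA1 : A *ᵥ 1 = rowSums A := by ext i; simp [rowSums, mulVec, dotProduct]
  rw [modularityMatrix_mulVec, hA1, dotProduct_one]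
  by_cases hvol : ∑ i, rowSums A i = 0
  · have : rowSums A = 0 := funext fun i =>
      (sum_eq_zero_iff_of_nonneg fun i _ => rowSums_nonneg hA i).mp hvol i (mem_univ i)
    simp [this]
  · rw [div_self hvol, one_smul, sub_self]

theorem IsSymm.modularityMatrix {A : Matrix ι ι ℝ} (hA : A.IsSymm) :
    A.modularityMatrix.IsSymm := by
  simp only [Matrix.modularityMatrix, IsSymm, transpose_sub, transpose_smul,
    transpose_vecMulVec, hA.eq]

theorem IsSymm.dotProduct_mulVec_add_smul_one {S : Matrix ι ι ℝ} (hS : S.IsSymm)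
    (hS1 : S *ᵥ 1 = 0) (x : ι → ℝ) (c : ℝ) :
    (x + c • 1) ⬝ᵥ S *ᵥ (x + c • 1) = x ⬝ᵥ S *ᵥ x := by
  have h1S : 1 ⬝ᵥ S *ᵥ x = 0 := by
    rw [dotProduct_mulVec, ← mulVec_transpose, hS.eq, hS1, zero_dotProduct]
  rw [mulVec_add, mulVec_smul, hS1, smul_zero, add_zero, add_dotProduct, smul_dotProduct,
    h1S, smul_zero, add_zero]

theorem IsSymm.forall_dotProduct_mulVec_nonpos_iff {S : Matrix ι ι ℝ} (hS : S.IsSymm) :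
    (∀ x, x ⬝ᵥ S *ᵥ x ≤ 0) ↔ ∀ (μ : ℝ) v, v ≠ 0 → S *ᵥ v = μ • v → μ ≤ 0 := by
  classical
  constructor
  · intro h μ v hv hSv
    have hvv : 0 < v ⬝ᵥ v := by simpa using dotProduct_self_star_pos_iff.mpr hv
    have := h v
    rw [hSv, dotProduct_smul, smul_eq_mul] at this
    exact nonpos_of_mul_nonpos_left this hvv
  · intro h x
    have hherm : (-S).IsHermitian := (isHermitian_iff_isSymm.mpr hS).neg
    have hpsd : (-S).PosSemidef := by
      refine hherm.posSemidef_iff_eigenvalues_nonneg.mpr fun i => ?_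
      have hb := hherm.mulVec_eigenvectorBasis i
      have hb0 : (hherm.eigenvectorBasis i).ofLp ≠ 0 :=
        (WithLp.ofLp_eq_zero _).not.mpr (hherm.eigenvectorBasis.orthonormal.ne_zero i)
      rw [neg_mulVec, neg_eq_iff_eq_neg, ← neg_smul] at hb
      simpa using h _ _ hb0 hb
    simpa [neg_mulVec] using hpsd.dotProduct_mulVec_nonneg x

end Matrix

namespace SimpleGraph

variable {V : Type*} {G : SimpleGraph V}

theorem IsCompleteMultipartite.exists_adj_iff_ne (h : G.IsCompleteMultipartite) :
    ∃ P : V → V, ∀ i j, G.Adj i j ↔ P i ≠ P j := by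
  refine ⟨fun i => (Quotient.mk h.setoid i).out, fun i j => ?_⟩
  rw [ne_eq, Quotient.out_inj, Quotient.eq]
  exact not_not.symm

variable [DecidableRel G.Adj]

theorem adjMatrix_apply_nonneg (i j : V) : 0 ≤ G.adjMatrix ℝ i j := by
  rw [adjMatrix_apply]; split_ifs <;> norm_num

variable [Fintype V]

theorem rowSums_adjMatrix (v : V) : (G.adjMatrix ℝ).rowSums v = G.degree v := by
  simp [rowSums, ← card_neighborFinset_eq_degree, neighborFinset_eq_filter]

theorem modularityMatrix_adjMatrix_mulVec_one : (G.adjMatrix ℝ).modularityMatrix *ᵥ 1 = 0 :=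
  modularityMatrix_mulVec_one adjMatrix_apply_nonneg

theorem dotProduct_adjMatrix_mulVec_of_adj_iff {α : Type*} [Fintype α] [DecidableEq α]
    {P : V → α} (hP : ∀ i j, G.Adj i j ↔ P i ≠ P j) (x : V → ℝ) :
    x ⬝ᵥ G.adjMatrix ℝ *ᵥ x = (∑ i, x i) ^ 2 - ∑ c, (∑ i with P i = c, x i) ^ 2 := by
  set s : α → ℝ := fun c => ∑ i with P i = c, x i
  have hrow : ∀ i, (G.adjMatrix ℝ *ᵥ x) i = ∑ j, x j - s (P i) := by
    intro i
    simp only [mulVec, dotProduct, adjMatrix_apply, hP, s, sum_filter, ← sum_sub_distrib]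
    refine sum_congr rfl fun j _ => ?_
    by_cases h : P i = P j <;> simp [h, eq_comm]
  have hfiber : ∑ i, x i * s (P i) = ∑ c, s c ^ 2 := by
    rw [← sum_fiberwise univ P]
    refine sum_congr rfl fun c _ => ?_
    rw [sum_congr rfl fun i hi => by rw [(mem_filter.mp hi).2], ← sum_mul, sq]
  simp only [dotProduct, hrow, mul_sub, sum_sub_distrib, ← sum_mul, hfiber, sq]
  rfl

theorem dotProduct_modularityMatrix_mulVec_nonpos_of_adj_iff {α : Type*} [Fintype α]
    [DecidableEq α] {P : V → α} (hP : ∀ i j, G.Adj i j ↔ P i ≠ P j) (x : V → ℝ) :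
    x ⬝ᵥ (G.adjMatrix ℝ).modularityMatrix *ᵥ x ≤ 0 := by
  rcases isEmpty_or_nonempty V with hV | hV
  · simp [dotProduct]
  -- `M 𝟙 = 0`, so `x` may be replaced by its projection onto `𝟙ᗮ`.
  set y := x + (-(∑ i, x i) / Fintype.card V) • 1 with hy
  have hy0 : ∑ i, y i = 0 := by
    simp only [hy, Pi.add_apply, Pi.smul_apply, Pi.one_apply, smul_eq_mul, mul_one,
      sum_add_distrib, sum_const, card_univ, nsmul_eq_mul]
    field_simp
    ring
  rw [← G.isSymm_adjMatrix.modularityMatrix.dotProduct_mulVec_add_smul_one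
      modularityMatrix_adjMatrix_mulVec_one x, ← hy, dotProduct_modularityMatrix_mulVec,
    dotProduct_adjMatrix_mulVec_of_adj_iff hP, hy0]
  have hvol : 0 ≤ ∑ i, (G.adjMatrix ℝ).rowSums i :=
    sum_nonneg fun i _ => rowSums_nonneg adjMatrix_apply_nonneg i
  have hparts : 0 ≤ ∑ c, (∑ i with P i = c, y i) ^ 2 := sum_nonneg fun c _ => sq_nonneg _
  linarith [div_nonneg (sq_nonneg ((G.adjMatrix ℝ).rowSums ⬝ᵥ y)) hvol]

theorem IsPathGraph3Compl.exists_dotProduct_modularityMatrix_mulVec_pos {v w₁ w₂ : V}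
    (h : G.IsPathGraph3Compl v w₁ w₂) (hv : 0 < G.degree v) :
    ∃ x, 0 < x ⬝ᵥ (G.adjMatrix ℝ).modularityMatrix *ᵥ x := by
  classical
  set d := (G.adjMatrix ℝ).rowSums
  set x : V → ℝ := Pi.single w₁ (d v) + Pi.single w₂ (d v) + Pi.single v (-(d w₁ + d w₂))
  refine ⟨x, ?_⟩
  have hdx : d ⬝ᵥ x = 0 := by
    simp only [x, dotProduct_add, dotProduct_single]; ring
  have hxAx : x ⬝ᵥ G.adjMatrix ℝ *ᵥ x = 2 * d v ^ 2 := by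
    simp only [x, mulVec_add, mulVec_single, op_smul_eq_smul, dotProduct_add, dotProduct_smul,
      add_dotProduct, single_dotProduct, col_apply, adjMatrix_apply, adj_comm, h.adj,
      h.not_adj_fst, h.not_adj_snd, SimpleGraph.irrefl, if_true, if_false, smul_eq_mul]
    ring
  have hdv : 0 < d v := by simpa [d, rowSums_adjMatrix] using hv
  rw [dotProduct_modularityMatrix_mulVec, hdx, hxAx, zero_pow two_ne_zero, zero_div, sub_zero]
  positivity

theorem isCompleteMultipartite_of_forall_dotProduct_modularityMatrix_mulVec_nonpos
    (hconn : G.Connected) (hM : ∀ x, x ⬝ᵥ (G.adjMatrix ℝ).modularityMatrix *ᵥ x ≤ 0) :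
    G.IsCompleteMultipartite := by
  by_contra hG
  obtain ⟨v, w₁, w₂, h⟩ := exists_isPathGraph3Compl_of_not_isCompleteMultipartite hG
  obtain ⟨x, hx⟩ := h.exists_dotProduct_modularityMatrix_mulVec_pos
    ((hconn.preconnected v w₁).degree_pos_left h.ne_fst)
  exact (hM x).not_gt hx

theorem forall_dotProduct_modularityMatrix_mulVec_nonpos_iff (hconn : G.Connected) :
    (∀ x, x ⬝ᵥ (G.adjMatrix ℝ).modularityMatrix *ᵥ x ≤ 0) ↔
      ∃ P : V → V, ∀ i j, G.Adj i j ↔ P i ≠ P j := by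
  classical
  exact ⟨fun hM => (isCompleteMultipartite_of_forall_dotProduct_modularityMatrix_mulVec_nonpos
      hconn hM).exists_adj_iff_ne,
    fun ⟨_, hP⟩ => dotProduct_modularityMatrix_mulVec_nonpos_of_adj_iff hP⟩

end SimpleGraph

theorem modularity_rightmost_eigenvalue_nonneg_and_zero_iff_completeMultipartite_general
    {n : ℕ} (G : SimpleGraph (Fin n)) [DecidableRel G.Adj]
    (hconn : G.Connected)
    (A : Matrix (Fin n) (Fin n) ℝ) (hA : A = G.adjMatrix ℝ)
    (d : Fin n → ℝ) (hd : d = fun i => ∑ j, A i j)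
    (vol : ℝ) (hvol : vol = ∑ i, d i)
    (M : Matrix (Fin n) (Fin n) ℝ)
    (hM : M = A - (1 / vol) • vecMulVec d d)
    (lam : ℝ)
    (hlam : IsGreatest {μ : ℝ | ∃ v : Fin n → ℝ, v ≠ 0 ∧ M.mulVec v = μ • v} lam) :
    0 ≤ lam ∧
    (lam = 0 ↔ ∃ P : Fin n → Fin n, ∀ i j : Fin n, G.Adj i j ↔ P i ≠ P j) := by
  subst hA hd hvol
  change M = (G.adjMatrix ℝ).modularityMatrix at hM
  subst hM
  have : Nonempty (Fin n) := hconn.nonempty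
  have hlam_nonneg : 0 ≤ lam :=
    hlam.2 ⟨1, one_ne_zero, by rw [SimpleGraph.modularityMatrix_adjMatrix_mulVec_one, zero_smul]⟩
  refine ⟨hlam_nonneg, ?_⟩
  rw [← SimpleGraph.forall_dotProduct_modularityMatrix_mulVec_nonpos_iff hconn,
    G.isSymm_adjMatrix.modularityMatrix.forall_dotProduct_mulVec_nonpos_iff,
    ← hlam_nonneg.ge_iff_eq', isLUB_le_iff hlam.isLUB]
  exact ⟨fun h μ v hv hMv => h ⟨v, hv, hMv⟩, fun h μ ⟨v, hv, hMv⟩ => h μ v hv hMv⟩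

/-- The rightmost (largest) eigenvalue of the modularity matrix
`M = A - (1/vol V) d dᵀ` is nonnegative, and it is zero if and only if `G` is a
complete multipartite graph (vertices partitioned into classes, adjacency iff
the endpoints lie in different classes). -/
theorem modularity_rightmost_eigenvalue_nonneg_and_zero_iff_completeMultipartite
    {n : ℕ} (hn : 0 < n) (G : SimpleGraph (Fin n)) [DecidableRel G.Adj]
    (hconn : G.Connected)
    (A : Matrix (Fin n) (Fin n) ℝ) (hA : A = G.adjMatrix ℝ)
    (d : Fin n → ℝ) (hd : d = fun i => ∑ j, A i j)
    (vol : ℝ) (hvol : vol = ∑ i, d i)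
    (M : Matrix (Fin n) (Fin n) ℝ)
    (hM : M = A - (1 / vol) • vecMulVec d d)
    (lam : ℝ)
    (hlam : IsGreatest {μ : ℝ | ∃ v : Fin n → ℝ, v ≠ 0 ∧ M.mulVec v = μ • v} lam) :
    0 ≤ lam ∧
    (lam = 0 ↔ ∃ P : Fin n → Fin n, ∀ i j : Fin n, G.Adj i j ↔ P i ≠ P j) :=
  modularity_rightmost_eigenvalue_nonneg_and_zero_iff_completeMultipartite_general G hconn A hA d hd
    vol hvol M hM lam hlam
end

section
/- Let G be a finite simple connected graph with normalized modularity matrix 𝓜 = 𝓐 - δδᵀ/vol V. Then 1 is not an eigenvalue of 𝓜. Furthermore, if G is not bipartite, then -1 is not an eigenvalue of 𝓜. -/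
/-!
Testing `𝓜 v = σ v` (`σ = ±1`) against `δ`, a fixed vector of the symmetric matrix `𝓐` with
`δ ⬝ δ = vol V`, gives `δ ⬝ v = 0` and hence `𝓐 v = σ v`. Writing `v = D^{1/2} u` turns this into
`A u = σ D u`: `u` lies in the kernel of the Laplacian `D - A` (σ = 1) or of the signless Laplacian
`D + A` (σ = -1), whose quadratic forms are sums of `(u i ∓ u j)²` over the edges. So `u` is
constant along edges for σ = 1, hence constant, and `δ ⬝ v = vol V · u = 0` kills it; for σ = -1
it alternates along edges, so it has no zeros and its sign is a proper 2-colouring.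
-/

open Matrix Finset

namespace Matrix

variable {ι K : Type*} [Fintype ι] [Field K]

theorem dotProduct_eq_zero_and_mulVec_eq_smul_of_sub_vecMulVec_mulVec_eq_smul
    {N : Matrix ι ι K} {δ v : ι → K} {vol σ : K} (hδN : δ ᵥ* N = δ) (hvol : δ ⬝ᵥ δ = vol)
    (hvol0 : vol ≠ 0) (hσ : σ ≠ 0) (hv : (N - (1 / vol) • vecMulVec δ δ) *ᵥ v = σ • v) :
    δ ⬝ᵥ v = 0 ∧ N *ᵥ v = σ • v := by
  have hexpand : (N - (1 / vol) • vecMulVec δ δ) *ᵥ v = N *ᵥ v - (δ ⬝ᵥ v / vol) • δ := by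
    rw [sub_mulVec, smul_mulVec, vecMulVec_mulVec, op_smul_eq_smul, smul_smul, one_div_mul_eq_div]
  have hδv : δ ⬝ᵥ v = 0 := by
    have h := congrArg (δ ⬝ᵥ ·) hv
    simp only [hexpand, dotProduct_sub, dotProduct_smul, dotProduct_mulVec, hδN, hvol, smul_eq_mul,
      div_mul_cancel₀ _ hvol0, sub_self] at h
    exact (mul_eq_zero.mp h.symm).resolve_left hσ
  refine ⟨hδv, ?_⟩
  rwa [hexpand, hδv, zero_div, zero_smul, sub_zero] at hv

end Matrix

namespace SimpleGraph

theorem Preconnected.colorable_two_of_forall_adj_eq_neg {V R : Type*} {G : SimpleGraph V}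
    [Ring R] [LinearOrder R] [IsStrictOrderedRing R] (hG : G.Preconnected) {x : V → R}
    (hx : x ≠ 0) (hadj : ∀ i j, G.Adj i j → x i = -x j) : G.Colorable 2 := by
  have hzero : ∀ {i j}, G.Reachable i j → x i = 0 → x j = 0 := by
    rintro i j ⟨p⟩ hi
    induction p with
    | nil => exact hi
    | cons h _ ih => exact ih (by rwa [hadj _ _ h, neg_eq_zero] at hi)
  obtain ⟨k, hk⟩ := Function.ne_iff.mp hx
  have hne : ∀ i, x i ≠ 0 := fun i hi => hk (hzero (hG i k) hi)
  refine (Coloring.mk (fun i => decide (0 < x i)) fun {i j} hij => ?_).colorable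
  rw [ne_eq, decide_eq_decide, hadj i j hij, neg_pos]
  rcases (hne j).lt_or_gt with h | h
  · exact fun hiff => h.asymm (hiff.mp h)
  · exact fun hiff => h.asymm (hiff.mpr h)

section

variable {V : Type*} [Fintype V] {G : SimpleGraph V} [DecidableRel G.Adj]

theorem Preconnected.sum_degree_pos [Nontrivial V] (hG : G.Preconnected) :
    0 < ∑ i, (G.degree i : ℝ) :=
  sum_pos (fun i _ => Nat.cast_pos.mpr (hG.degree_pos_of_nontrivial i)) univ_nonempty

theorem exists_eq_sqrt_degree_mul (hdeg : ∀ i, 0 < G.degree i) (v : V → ℝ) :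
    ∃ u : V → ℝ, v = fun i => √(G.degree i : ℝ) * u i := by
  refine ⟨fun i => v i / √(G.degree i : ℝ), funext fun i => ?_⟩
  rw [mul_div_cancel₀ _ (Real.sqrt_ne_zero'.mpr (Nat.cast_pos.mpr (hdeg i)))]

end

variable {V : Type*} [Fintype V] [DecidableEq V] (G : SimpleGraph V) [DecidableRel G.Adj]

def signlessLapMatrix (R : Type*) [AddMonoidWithOne R] : Matrix V V R :=
  G.degMatrix R + G.adjMatrix R

theorem dotProduct_signlessLapMatrix_mulVec {R : Type*} [Field R] [CharZero R] (x : V → R) :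
    x ⬝ᵥ (G.signlessLapMatrix R *ᵥ x) =
      (∑ i : V, ∑ j : V, if G.Adj i j then (x i + x j) ^ 2 else 0) / 2 := by
  have hdeg : ∑ i : V, (G.degree i : R) * x i * x i =
      ∑ i : V, ∑ j : V, if G.Adj i j then x i ^ 2 else 0 := by
    simp_rw [G.degree_eq_sum_if_adj (R := R), sum_mul, ite_mul, one_mul, zero_mul, sq]
  have hsymm : ∑ i : V, ∑ j : V, (if G.Adj i j then x j ^ 2 else 0) =
      ∑ i : V, ∑ j : V, if G.Adj i j then x i ^ 2 else 0 := by
    rw [sum_comm]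
    simp_rw [G.adj_comm]
  have hexpand : ∀ i j, (if G.Adj i j then (x i + x j) ^ 2 else (0 : R)) =
      (if G.Adj i j then x i ^ 2 else 0) + 2 * (if G.Adj i j then x i * x j else 0) +
        (if G.Adj i j then x j ^ 2 else 0) := by
    intro i j
    split_ifs <;> ring
  simp_rw [signlessLapMatrix, add_mulVec, dotProduct_add, dotProduct_mulVec_degMatrix,
    dotProduct_mulVec_adjMatrix, hexpand, sum_add_distrib, ← mul_sum, hsymm, hdeg]
  ring

theorem forall_adj_eq_neg_of_signlessLapMatrix_mulVec_eq_zero {R : Type*} [Field R]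
    [LinearOrder R] [IsStrictOrderedRing R] {x : V → R} (hx : G.signlessLapMatrix R *ᵥ x = 0) :
    ∀ i j, G.Adj i j → x i = -x j := by
  have h := G.dotProduct_signlessLapMatrix_mulVec x
  rw [hx, dotProduct_zero, eq_comm, div_eq_zero_iff, or_iff_left two_ne_zero] at h
  have hnonneg : ∀ i j, 0 ≤ if G.Adj i j then (x i + x j) ^ 2 else (0 : R) := by
    intro i j
    split_ifs <;> positivity
  intro i j hij
  have hrow := (sum_eq_zero_iff_of_nonneg fun i _ => sum_nonneg fun j _ => hnonneg i j).mp h i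
    (mem_univ i)
  have hentry := (sum_eq_zero_iff_of_nonneg fun j _ => hnonneg i j).mp hrow j (mem_univ j)
  simpa [hij, eq_neg_iff_add_eq_zero] using hentry

noncomputable def normalizedAdjMatrix : Matrix V V ℝ :=
  diagonal (fun i => (√(G.degree i : ℝ))⁻¹) * G.adjMatrix ℝ *
    diagonal (fun i => (√(G.degree i : ℝ))⁻¹)

variable {G}

theorem vecMul_normalizedAdjMatrix (hdeg : ∀ i, 0 < G.degree i) :
    (fun i => √(G.degree i : ℝ)) ᵥ* G.normalizedAdjMatrix = fun i => √(G.degree i : ℝ) := by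
  have hs : ∀ i, √(G.degree i : ℝ) ≠ 0 :=
    fun i => Real.sqrt_ne_zero'.mpr (Nat.cast_pos.mpr (hdeg i))
  have hones : (fun i => √(G.degree i : ℝ)) ᵥ* diagonal (fun i => (√(G.degree i : ℝ))⁻¹) = 1 := by
    ext i
    rw [vecMul_diagonal, mul_inv_cancel₀ (hs i), Pi.one_apply]
  ext j
  rw [normalizedAdjMatrix, ← vecMul_vecMul, ← vecMul_vecMul, hones, vecMul_diagonal,
    adjMatrix_vecMul_apply]
  simp only [Pi.one_apply, sum_const, card_neighborFinset_eq_degree, nsmul_eq_mul, mul_one,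
    ← div_eq_mul_inv, Real.div_sqrt]

theorem adjMatrix_mulVec_eq_smul_degMatrix_mulVec (hdeg : ∀ i, 0 < G.degree i) {σ : ℝ}
    {u : V → ℝ} (hu : G.normalizedAdjMatrix *ᵥ (fun i => √(G.degree i : ℝ) * u i) =
      σ • fun i => √(G.degree i : ℝ) * u i) :
    G.adjMatrix ℝ *ᵥ u = σ • G.degMatrix ℝ *ᵥ u := by
  have hs : ∀ i, √(G.degree i : ℝ) ≠ 0 :=
    fun i => Real.sqrt_ne_zero'.mpr (Nat.cast_pos.mpr (hdeg i))
  have hcancel : diagonal (fun i => (√(G.degree i : ℝ))⁻¹) *ᵥ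
      (fun i => √(G.degree i : ℝ) * u i) = u := by
    ext i
    rw [mulVec_diagonal, inv_mul_cancel_left₀ (hs i)]
  ext i
  have h := congrFun hu i
  rw [normalizedAdjMatrix, ← mulVec_mulVec, ← mulVec_mulVec, hcancel, mulVec_diagonal,
    Pi.smul_apply, smul_eq_mul, inv_mul_eq_iff_eq_mul₀ (hs i)] at h
  rw [h, Pi.smul_apply, degMatrix_mulVec_apply, smul_eq_mul]
  linear_combination σ * u i * Real.mul_self_sqrt (Nat.cast_nonneg (G.degree i))

theorem Connected.eq_zero_of_lapMatrix_mulVec_eq_zero [Nontrivial V] (hG : G.Connected)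
    {x : V → ℝ} (hx : G.lapMatrix ℝ *ᵥ x = 0) (hsum : ∑ i, (G.degree i : ℝ) * x i = 0) :
    x = 0 := by
  obtain ⟨k⟩ := hG.nonempty
  have hconst : ∀ i, x i = x k :=
    fun i => (lapMatrix_mulVec_eq_zero_iff_forall_reachable G).mp hx i k (hG i k)
  simp_rw [hconst, ← sum_mul, mul_eq_zero, hG.preconnected.sum_degree_pos.ne', false_or] at hsum
  ext i
  rw [hconst, hsum, Pi.zero_apply]

theorem Connected.eq_zero_of_normalizedAdjMatrix_mulVec_eq_self [Nontrivial V]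
    (hG : G.Connected) {v : V → ℝ} (hv : G.normalizedAdjMatrix *ᵥ v = v)
    (hδv : (fun i => √(G.degree i : ℝ)) ⬝ᵥ v = 0) : v = 0 := by
  have hdeg : ∀ i, 0 < G.degree i := fun i => hG.preconnected.degree_pos_of_nontrivial i
  obtain ⟨u, rfl⟩ := exists_eq_sqrt_degree_mul hdeg v
  have hL : G.lapMatrix ℝ *ᵥ u = 0 := by
    rw [lapMatrix, sub_mulVec,
      adjMatrix_mulVec_eq_smul_degMatrix_mulVec hdeg (σ := 1) (by rwa [one_smul]), one_smul,
      sub_self]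
  have hsum : ∑ i, (G.degree i : ℝ) * u i = 0 := by
    rw [← hδv]
    simp only [dotProduct, ← mul_assoc, Real.mul_self_sqrt (Nat.cast_nonneg _)]
  rw [hG.eq_zero_of_lapMatrix_mulVec_eq_zero hL hsum]
  exact funext fun _ => mul_zero _

theorem Preconnected.colorable_two_of_normalizedAdjMatrix_mulVec_eq_neg [Nontrivial V]
    (hG : G.Preconnected) {v : V → ℝ} (hv0 : v ≠ 0) (hv : G.normalizedAdjMatrix *ᵥ v = -v) :
    G.Colorable 2 := by
  have hdeg : ∀ i, 0 < G.degree i := fun i => hG.degree_pos_of_nontrivial i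
  obtain ⟨u, rfl⟩ := exists_eq_sqrt_degree_mul hdeg v
  have hQ : G.signlessLapMatrix ℝ *ᵥ u = 0 := by
    rw [signlessLapMatrix, add_mulVec,
      adjMatrix_mulVec_eq_smul_degMatrix_mulVec hdeg (σ := -1) (by rwa [neg_one_smul]),
      neg_one_smul, add_neg_cancel]
  refine hG.colorable_two_of_forall_adj_eq_neg ?_
    (G.forall_adj_eq_neg_of_signlessLapMatrix_mulVec_eq_zero hQ)
  rintro rfl
  exact hv0 (funext fun _ => mul_zero _)

end SimpleGraph

open SimpleGraph in
theorem normalized_modularity_extreme_eigenvalues_general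
    {n : ℕ} (G : SimpleGraph (Fin n)) [DecidableRel G.Adj]
    (hconn : G.Connected)
    (A : Matrix (Fin n) (Fin n) ℝ) (hA : A = G.adjMatrix ℝ)
    (d : Fin n → ℝ) (hd : d = fun i => ∑ j, A i j)
    (vol : ℝ) (hvol : vol = ∑ i, d i)
    (δ : Fin n → ℝ) (hδ : δ = fun i => Real.sqrt (d i))
    (NA : Matrix (Fin n) (Fin n) ℝ)
    (hNA : NA = diagonal (fun i => (Real.sqrt (d i))⁻¹) * A *
                diagonal (fun i => (Real.sqrt (d i))⁻¹))
    (NM : Matrix (Fin n) (Fin n) ℝ)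
    (hNM : NM = NA - (1 / vol) • vecMulVec δ δ) :
    (¬ ∃ v : Fin n → ℝ, v ≠ 0 ∧ NM.mulVec v = (1 : ℝ) • v) ∧
    (¬ G.Colorable 2 → ¬ ∃ v : Fin n → ℝ, v ≠ 0 ∧ NM.mulVec v = (-1 : ℝ) • v) := by
  have hdegree (i : Fin n) : ∑ j, G.adjMatrix ℝ i j = G.degree i := by
    simp only [adjMatrix_apply, sum_boole, degree_eq_sum_if_adj]
  subst hA hd hvol hδ hNA hNM
  simp only [hdegree]
  rcases subsingleton_or_nontrivial (Fin n) with hV | hV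
  · -- a single vertex has degree 0, and `(√0)⁻¹ = 0`, `1 / 0 = 0` make `NM = 0`
    simp
  have hδδ : (fun i => √(G.degree i : ℝ)) ⬝ᵥ (fun i => √(G.degree i : ℝ)) =
      ∑ i, (G.degree i : ℝ) := by
    simp only [dotProduct, Real.mul_self_sqrt (Nat.cast_nonneg _)]
  have heigen := fun {σ : ℝ} (hσ : σ ≠ 0) {v} =>
    dotProduct_eq_zero_and_mulVec_eq_smul_of_sub_vecMulVec_mulVec_eq_smul (v := v)
      (vecMul_normalizedAdjMatrix fun i => hconn.preconnected.degree_pos_of_nontrivial i) hδδ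
      hconn.preconnected.sum_degree_pos.ne' hσ
  refine ⟨fun ⟨v, hv0, hv⟩ => ?_, fun hcol ⟨v, hv0, hv⟩ => ?_⟩
  · obtain ⟨hδv, hv⟩ := heigen one_ne_zero hv
    exact hv0 (hconn.eq_zero_of_normalizedAdjMatrix_mulVec_eq_self (by rwa [one_smul] at hv) hδv)
  · obtain ⟨-, hv⟩ := heigen (neg_ne_zero.mpr one_ne_zero) hv
    exact hcol (hconn.preconnected.colorable_two_of_normalizedAdjMatrix_mulVec_eq_neg hv0
      (by rwa [neg_one_smul] at hv))

/-- For a connected graph `G`, `1` is not an eigenvalue of the normalized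
modularity matrix `𝓜 = 𝓐 - δδᵀ/vol V`. Furthermore, if `G` is not bipartite
(i.e. not 2-colorable), then `-1` is not an eigenvalue of `𝓜`. -/
theorem normalized_modularity_extreme_eigenvalues
    {n : ℕ} (hn : 0 < n) (G : SimpleGraph (Fin n)) [DecidableRel G.Adj]
    (hconn : G.Connected)
    (A : Matrix (Fin n) (Fin n) ℝ) (hA : A = G.adjMatrix ℝ)
    (d : Fin n → ℝ) (hd : d = fun i => ∑ j, A i j)
    (vol : ℝ) (hvol : vol = ∑ i, d i)
    (δ : Fin n → ℝ) (hδ : δ = fun i => Real.sqrt (d i))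
    (NA : Matrix (Fin n) (Fin n) ℝ)
    (hNA : NA = diagonal (fun i => (Real.sqrt (d i))⁻¹) * A *
                diagonal (fun i => (Real.sqrt (d i))⁻¹))
    (NM : Matrix (Fin n) (Fin n) ℝ)
    (hNM : NM = NA - (1 / vol) • vecMulVec δ δ) :
    (¬ ∃ v : Fin n → ℝ, v ≠ 0 ∧ NM.mulVec v = (1 : ℝ) • v) ∧
    (¬ G.Colorable 2 → ¬ ∃ v : Fin n → ℝ, v ≠ 0 ∧ NM.mulVec v = (-1 : ℝ) • v) :=
  normalized_modularity_extreme_eigenvalues_general G hconn A hA d hd vol hvol δ hδ NA hNA NM hNM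
end

section
/- Let G be a finite simple connected graph and let ∅ ≠ S ⊊ V. Define v_S = D^{1/2}(𝟙_S - c𝟙) with c = vol S/vol V. Then δᵀ v_S = 0, v_Sᵀ v_S = vol S · vol S̄ / vol V, and v_Sᵀ 𝓜 v_S / v_Sᵀ v_S = q_norm(S,S̄) = Q(S)·vol V/(vol S · vol S̄). Consequently the normalized cut-modularity satisfies q_G^{NCut} ≤ μ_G, where μ_G = max { vᵀ𝓜v / vᵀv : v ≠ 0, vᵀδ = 0 } is the normalized algebraic modularity. -/
open Matrix Finset

/-!
Put `x = 𝟙_S - c𝟙` and `v = D^{1/2} x`. The choice `c = vol S / vol V` makes `v` orthogonal to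
`δ = D^{1/2} 𝟙`, so the rank-one part of `𝓜` does not see `v`, and
`vᵀ𝓜v = xᵀAx = e_in(S) - 2c·vol S + c²·vol V = Q(S)` while `vᵀv = xᵀDx = vol S · vol S̄ / vol V`.
Thus every normalized cut value is the Rayleigh quotient of `𝓜` at a nonzero vector of `δ^⊥`, and
is at most `μ_G`. Connectedness makes all degrees positive, so that `D^{-1/2}` inverts `D^{1/2}`.
-/

section NormalizedModularity

variable {ι : Type*} [Fintype ι]

lemma sqrt_mul_dotProduct_sqrt_mul {d : ι → ℝ} (hd : ∀ i, 0 ≤ d i) (x y : ι → ℝ) :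
    (fun i => √(d i) * x i) ⬝ᵥ (fun i => √(d i) * y i) = ∑ i, d i * (x i * y i) := by
  refine sum_congr rfl fun i _ => ?_
  linear_combination (x i * y i) * Real.mul_self_sqrt (hd i)

lemma sqrt_dotProduct_sqrt_mul {d : ι → ℝ} (hd : ∀ i, 0 ≤ d i) (y : ι → ℝ) :
    (fun i => √(d i)) ⬝ᵥ (fun i => √(d i) * y i) = ∑ i, d i * y i := by
  simpa using sqrt_mul_dotProduct_sqrt_mul hd 1 y

lemma dotProduct_sub_smul_vecMulVec_self_mulVec {M : Matrix ι ι ℝ} {u v : ι → ℝ}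
    (h : u ⬝ᵥ v = 0) (a : ℝ) : v ⬝ᵥ (M - a • vecMulVec u u) *ᵥ v = v ⬝ᵥ M *ᵥ v := by
  rw [sub_mulVec, smul_mulVec, vecMulVec_mulVec, h]
  simp

variable [DecidableEq ι]

lemma sqrt_mul_dotProduct_diagonal_inv_sqrt_mulVec {d : ι → ℝ} (hd : ∀ i, 0 < d i)
    (x z : ι → ℝ) :
    (fun i => √(d i) * x i) ⬝ᵥ diagonal (fun i => (√(d i))⁻¹) *ᵥ z = x ⬝ᵥ z := by
  refine sum_congr rfl fun i _ => ?_
  have := (Real.sqrt_pos.2 (hd i)).ne'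
  rw [mulVec_diagonal]
  field_simp

lemma diagonal_inv_sqrt_mulVec_sqrt_mul {d : ι → ℝ} (hd : ∀ i, 0 < d i) (y : ι → ℝ) :
    diagonal (fun i => (√(d i))⁻¹) *ᵥ (fun i => √(d i) * y i) = y := by
  ext i
  have := (Real.sqrt_pos.2 (hd i)).ne'
  rw [mulVec_diagonal]
  field_simp

lemma sqrt_mul_dotProduct_normalized_mulVec {d : ι → ℝ} (hd : ∀ i, 0 < d i)
    (A : Matrix ι ι ℝ) (x y : ι → ℝ) :
    (fun i => √(d i) * x i) ⬝ᵥ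
        (diagonal (fun i => (√(d i))⁻¹) * A * diagonal (fun i => (√(d i))⁻¹)) *ᵥ
          (fun i => √(d i) * y i) = x ⬝ᵥ A *ᵥ y := by
  rw [← mulVec_mulVec, ← mulVec_mulVec, diagonal_inv_sqrt_mulVec_sqrt_mul hd,
    sqrt_mul_dotProduct_diagonal_inv_sqrt_mulVec hd]

def indicatorSubConst (S : Finset ι) (c : ℝ) : ι → ℝ := fun i => (if i ∈ S then 1 else 0) - c

lemma sum_mul_indicatorSubConst (d : ι → ℝ) (S : Finset ι) (c : ℝ) :
    ∑ i, d i * indicatorSubConst S c i = ∑ i ∈ S, d i - c * ∑ i, d i := by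
  simp [indicatorSubConst, mul_sub, sum_sub_distrib, mul_sum, mul_comm]

lemma sum_mul_indicatorSubConst_mul_self (d : ι → ℝ) (S : Finset ι) (c : ℝ) :
    ∑ i, d i * (indicatorSubConst S c i * indicatorSubConst S c i) =
      (1 - 2 * c) * ∑ i ∈ S, d i + c ^ 2 * ∑ i, d i := by
  have h : ∀ i, d i * (indicatorSubConst S c i * indicatorSubConst S c i) =
      (1 - 2 * c) * (if i ∈ S then d i else 0) + c ^ 2 * d i := by
    intro i; unfold indicatorSubConst; split_ifs <;> ring
  simp only [h, sum_add_distrib, ← mul_sum, sum_ite_mem, univ_inter]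

lemma indicatorSubConst_dotProduct_mulVec {A : Matrix ι ι ℝ} (hA : A.IsSymm)
    (S : Finset ι) (c : ℝ) :
    indicatorSubConst S c ⬝ᵥ A *ᵥ indicatorSubConst S c =
      ∑ i ∈ S, ∑ j ∈ S, A i j - 2 * c * ∑ i ∈ S, ∑ j, A i j + c ^ 2 * ∑ i, ∑ j, A i j := by
  have hcol : ∑ i, ∑ j ∈ S, A i j = ∑ i ∈ S, ∑ j, A i j :=
    sum_comm.trans (by simp only [hA.apply])
  simp only [indicatorSubConst, dotProduct, mulVec, sub_mul, mul_sub, sum_sub_distrib, ite_mul,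
    mul_ite, sum_ite_mem, one_mul, zero_mul, mul_one, mul_zero, univ_inter, ← sum_mul, ← mul_sum,
    hcol]
  ring

noncomputable def normalizedCutVector (d : ι → ℝ) (S : Finset ι) : ι → ℝ :=
  fun i => √(d i) * indicatorSubConst S ((∑ k ∈ S, d k) / ∑ k, d k) i

noncomputable def normalizedModularityMatrix (A : Matrix ι ι ℝ) (d : ι → ℝ) : Matrix ι ι ℝ :=
  diagonal (fun i => (√(d i))⁻¹) * A * diagonal (fun i => (√(d i))⁻¹) -
    (1 / ∑ i, d i) • vecMulVec (fun i => √(d i)) (fun i => √(d i))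

variable {d : ι → ℝ}

lemma sqrt_dotProduct_normalizedCutVector (hd : ∀ i, 0 ≤ d i) (hvol : ∑ i, d i ≠ 0)
    (S : Finset ι) : (fun i => √(d i)) ⬝ᵥ normalizedCutVector d S = 0 := by
  unfold normalizedCutVector
  rw [sqrt_dotProduct_sqrt_mul hd, sum_mul_indicatorSubConst]
  field_simp
  ring

lemma normalizedCutVector_dotProduct_self (hd : ∀ i, 0 ≤ d i) (hvol : ∑ i, d i ≠ 0)
    (S : Finset ι) :
    normalizedCutVector d S ⬝ᵥ normalizedCutVector d S =
      (∑ i ∈ S, d i) * (∑ i ∈ Sᶜ, d i) / ∑ i, d i := by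
  unfold normalizedCutVector
  rw [sqrt_mul_dotProduct_sqrt_mul hd, sum_mul_indicatorSubConst_mul_self,
    ← sum_add_sum_compl S d]
  rw [← sum_add_sum_compl S d] at hvol
  field_simp
  ring

lemma normalizedCutVector_ne_zero (hd : ∀ i, 0 < d i) {S : Finset ι} (hS : S.Nonempty)
    (hSc : Sᶜ.Nonempty) : normalizedCutVector d S ≠ 0 := by
  have hvol : 0 < ∑ i, d i := sum_pos (fun i _ => hd i) (hS.mono (subset_univ S))
  intro h
  have := normalizedCutVector_dotProduct_self (fun i => (hd i).le) hvol.ne' S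
  rw [h, zero_dotProduct, eq_comm] at this
  have hs := sum_pos (fun i _ => hd i) hS
  have ht := sum_pos (fun i _ => hd i) hSc
  exact this.not_gt (by positivity)

lemma normalizedCutVector_dotProduct_normalizedModularityMatrix_mulVec {A : Matrix ι ι ℝ}
    (hA : A.IsSymm) (hdA : d = fun i => ∑ j, A i j) (hd : ∀ i, 0 < d i)
    (hvol : ∑ i, d i ≠ 0) (S : Finset ι) :
    normalizedCutVector d S ⬝ᵥ normalizedModularityMatrix A d *ᵥ normalizedCutVector d S =
      ∑ i ∈ S, ∑ j ∈ S, A i j - (∑ i ∈ S, d i) ^ 2 / ∑ i, d i := by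
  rw [normalizedModularityMatrix, dotProduct_sub_smul_vecMulVec_self_mulVec
      (sqrt_dotProduct_normalizedCutVector (fun i => (hd i).le) hvol S)]
  unfold normalizedCutVector
  rw [sqrt_mul_dotProduct_normalized_mulVec hd,
    indicatorSubConst_dotProduct_mulVec hA]
  subst hdA
  field_simp
  ring

end NormalizedModularity

lemma SimpleGraph.Preconnected.sum_adjMatrix_apply_pos {V : Type*} [Fintype V] [DecidableEq V]
    [Nontrivial V] {G : SimpleGraph V} [DecidableRel G.Adj] (hG : G.Preconnected) (i : V) :
    0 < ∑ j, G.adjMatrix ℝ i j := by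
  have hdeg : ∑ j, G.adjMatrix ℝ i j = G.degree i := by
    simp [adjMatrix_apply, degree, neighborFinset_eq_filter, sum_boole]
  rw [hdeg]
  exact_mod_cast hG.degree_pos_of_nontrivial i

theorem normalized_cut_modularity_le_normalized_algebraic_modularity_general
    {n : ℕ} (G : SimpleGraph (Fin n)) [DecidableRel G.Adj]
    (hconn : G.Connected)
    (A : Matrix (Fin n) (Fin n) ℝ) (hA : A = G.adjMatrix ℝ)
    (d : Fin n → ℝ) (hd : d = fun i => ∑ j, A i j)
    (vol : ℝ) (hvol : vol = ∑ i, d i)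
    (δ : Fin n → ℝ) (hδ : δ = fun i => Real.sqrt (d i))
    (NM : Matrix (Fin n) (Fin n) ℝ)
    (hNM : NM = diagonal (fun i => (Real.sqrt (d i))⁻¹) * A *
                diagonal (fun i => (Real.sqrt (d i))⁻¹) - (1 / vol) • vecMulVec δ δ)
    (Q : Finset (Fin n) → ℝ)
    (hQ : ∀ S, Q S = (∑ i ∈ S, ∑ j ∈ S, A i j) - (∑ i ∈ S, d i) ^ 2 / vol)
    (vs : Finset (Fin n) → (Fin n → ℝ))
    (hvs : ∀ S, vs S = fun i => Real.sqrt (d i) *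
            ((if i ∈ S then (1 : ℝ) else 0) - (∑ k ∈ S, d k) / vol))
    (μG : ℝ)
    (hμG : IsGreatest {r : ℝ | ∃ v : Fin n → ℝ, v ≠ 0 ∧ v ⬝ᵥ δ = 0 ∧
            r = (v ⬝ᵥ NM.mulVec v) / (v ⬝ᵥ v)} μG)
    (qN : ℝ)
    (hqN : IsGreatest {q : ℝ | ∃ S : Finset (Fin n), S.Nonempty ∧ S ≠ univ ∧
            q = Q S * vol / ((∑ i ∈ S, d i) * (∑ i ∈ Sᶜ, d i))} qN) :
    (∀ S : Finset (Fin n), S.Nonempty → S ≠ univ →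
      δ ⬝ᵥ vs S = 0 ∧
      (vs S) ⬝ᵥ (vs S) = (∑ i ∈ S, d i) * (∑ i ∈ Sᶜ, d i) / vol ∧
      ((vs S) ⬝ᵥ NM.mulVec (vs S)) / ((vs S) ⬝ᵥ (vs S)) =
        Q S * vol / ((∑ i ∈ S, d i) * (∑ i ∈ Sᶜ, d i))) ∧
    qN ≤ μG := by
  have hvsS : vs = normalizedCutVector d := funext fun S => by rw [hvs, hvol]; rfl
  have hNM' : NM = normalizedModularityMatrix A d := by rw [hNM, hδ, hvol]; rfl
  subst hvsS hNM' hvol hδ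
  have hcut : ∀ S : Finset (Fin n), S.Nonempty → S ≠ univ →
      (fun i => √(d i)) ⬝ᵥ normalizedCutVector d S = 0 ∧
      normalizedCutVector d S ≠ 0 ∧
      normalizedCutVector d S ⬝ᵥ normalizedCutVector d S =
        (∑ i ∈ S, d i) * (∑ i ∈ Sᶜ, d i) / ∑ i, d i ∧
      normalizedCutVector d S ⬝ᵥ normalizedModularityMatrix A d *ᵥ normalizedCutVector d S =
        Q S := by
    intro S ⟨a, ha⟩ hSu
    obtain ⟨b, hb⟩ : Sᶜ.Nonempty := (compl_ne_univ_iff_nonempty Sᶜ).1 (by rwa [compl_compl])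
    have : Nontrivial (Fin n) := nontrivial_of_ne a b (ne_of_mem_of_not_mem ha (mem_compl.1 hb))
    have hpos : ∀ i, 0 < d i := by
      simpa only [hd, hA] using hconn.preconnected.sum_adjMatrix_apply_pos
    have hvol : ∑ i, d i ≠ 0 := (sum_pos (fun i _ => hpos i) univ_nonempty).ne'
    exact ⟨sqrt_dotProduct_normalizedCutVector (fun i => (hpos i).le) hvol S,
      normalizedCutVector_ne_zero hpos ⟨a, ha⟩ ⟨b, hb⟩,
      normalizedCutVector_dotProduct_self (fun i => (hpos i).le) hvol S,
      by rw [hQ, normalizedCutVector_dotProduct_normalizedModularityMatrix_mulVec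
        (hA ▸ G.isSymm_adjMatrix) hd hpos hvol]⟩
  refine ⟨fun S hS hSu => ?_, ?_⟩
  · obtain ⟨horth, -, hnorm, hform⟩ := hcut S hS hSu
    exact ⟨horth, hnorm, by rw [hform, hnorm, div_div_eq_mul_div]⟩
  · obtain ⟨S, hS, hSu, rfl⟩ := hqN.1
    obtain ⟨horth, hne, hnorm, hform⟩ := hcut S hS hSu
    exact hμG.2 ⟨_, hne, by rwa [dotProduct_comm], by rw [hform, hnorm, div_div_eq_mul_div]⟩

/-- For any nonempty proper `S ⊂ V` and `v_S = D^{1/2}(𝟙_S - c𝟙)` with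
`c = vol S / vol V`, one has `δᵀv_S = 0`, `v_Sᵀv_S = vol S · vol S̄ / vol V`, and
`v_Sᵀ𝓜v_S / v_Sᵀv_S = q_norm(S,S̄) = Q(S)·vol V/(vol S · vol S̄)`. Consequently the
normalized cut-modularity satisfies `q_G^{NCut} ≤ μ_G`, the normalized algebraic
modularity. -/
theorem normalized_cut_modularity_le_normalized_algebraic_modularity
    {n : ℕ} (hn : 0 < n) (G : SimpleGraph (Fin n)) [DecidableRel G.Adj]
    (hconn : G.Connected)
    (A : Matrix (Fin n) (Fin n) ℝ) (hA : A = G.adjMatrix ℝ)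
    (d : Fin n → ℝ) (hd : d = fun i => ∑ j, A i j)
    (vol : ℝ) (hvol : vol = ∑ i, d i)
    (δ : Fin n → ℝ) (hδ : δ = fun i => Real.sqrt (d i))
    (NM : Matrix (Fin n) (Fin n) ℝ)
    (hNM : NM = diagonal (fun i => (Real.sqrt (d i))⁻¹) * A *
                diagonal (fun i => (Real.sqrt (d i))⁻¹) - (1 / vol) • vecMulVec δ δ)
    (Q : Finset (Fin n) → ℝ)
    (hQ : ∀ S, Q S = (∑ i ∈ S, ∑ j ∈ S, A i j) - (∑ i ∈ S, d i) ^ 2 / vol)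
    (vs : Finset (Fin n) → (Fin n → ℝ))
    (hvs : ∀ S, vs S = fun i => Real.sqrt (d i) *
            ((if i ∈ S then (1 : ℝ) else 0) - (∑ k ∈ S, d k) / vol))
    (μG : ℝ)
    (hμG : IsGreatest {r : ℝ | ∃ v : Fin n → ℝ, v ≠ 0 ∧ v ⬝ᵥ δ = 0 ∧
            r = (v ⬝ᵥ NM.mulVec v) / (v ⬝ᵥ v)} μG)
    (qN : ℝ)
    (hqN : IsGreatest {q : ℝ | ∃ S : Finset (Fin n), S.Nonempty ∧ S ≠ univ ∧
            q = Q S * vol / ((∑ i ∈ S, d i) * (∑ i ∈ Sᶜ, d i))} qN) :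
    (∀ S : Finset (Fin n), S.Nonempty → S ≠ univ →
      δ ⬝ᵥ vs S = 0 ∧
      (vs S) ⬝ᵥ (vs S) = (∑ i ∈ S, d i) * (∑ i ∈ Sᶜ, d i) / vol ∧
      ((vs S) ⬝ᵥ NM.mulVec (vs S)) / ((vs S) ⬝ᵥ (vs S)) =
        Q S * vol / ((∑ i ∈ S, d i) * (∑ i ∈ Sᶜ, d i))) ∧
    qN ≤ μG :=
  normalized_cut_modularity_le_normalized_algebraic_modularity_general G hconn A hA d hd vol hvol δ
    hδ NM hNM Q hQ vs hvs μG hμG qN hqN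
end

section
/- Let G be a finite simple connected graph which is not a star, and let μ₁ be the rightmost (largest) eigenvalue of its normalized modularity matrix 𝓜. Then 1 - 2√(1 - μ₁²) ≤ q_G^{NCut} ≤ μ₁, where q_G^{NCut} is the normalized cut-modularity of G. -/
/-!
Upper bound: for a proper vertex set `S`, the vector `y = √d ⊙ (𝟙_S - vol S / vol V)` satisfies
`yᵀ 𝓜 y = Q(S)` and `‖y‖² = vol S · vol S̄ / vol V`, so the Rayleigh bound `yᵀ 𝓜 y ≤ μ₁ ‖y‖²` is
exactly `q(S) ≤ μ₁`.

Lower bound: `𝓜 √d = 0`, so `μ₁ ≥ 0`, and for `μ₁ = 0` the claim is the trivial `-1 ≤ q`. If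
`μ₁ > 0`, a `μ₁`-eigenvector `v` is orthogonal to `√d`, so `f = D^{-1/2} v` satisfies
`A f = μ₁ D f` and `Σ dᵢ fᵢ = 0`. Up to sign, `{f > 0}` carries at most half of the volume, and
maximality of `q` gives `cut C ≥ h · vol C` for every `C ⊆ {f > 0}`, where `h = (1 - q) / 2`.
For `g = max f 0`, `s = Σ dᵢ gᵢ²` and `W = gᵀ A g`, the coarea inequality gives
`2 h s ≤ Σ Aᵢⱼ |gᵢ² - gⱼ²|`, Cauchy–Schwarz bounds the right side by `2 √(s² - W²)`, and
`μ₁ s ≤ W`. Hence `μ₁² + h² ≤ 1`.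
-/

open Matrix Finset

theorem le_sqrt_one_sub_sq_of_le_sqrt_one_sub_sq {a b : ℝ} (ha : 0 < a) (h : a ≤ √(1 - b ^ 2)) :
    b ≤ √(1 - a ^ 2) :=
  Real.le_sqrt_of_sq_le (by linarith [(Real.le_sqrt' ha).1 h])

theorem abs_sub_eq_of_eq_zero_or_le {a b m : ℝ} (hm : 0 < m) (ha : a = 0 ∨ m ≤ a)
    (hb : b = 0 ∨ m ≤ b) :
    |a - b| = m * |(if 0 < a then 1 else 0) - (if 0 < b then 1 else 0)|
      + |max (a - m) 0 - max (b - m) 0| := by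
  have h0 : max (-m) 0 = 0 := by simp [hm.le]
  rcases ha with rfl | ha <;> rcases hb with rfl | hb
  · simp
  · simp [h0, hm.trans_le hb]
    rw [max_eq_left (sub_nonneg.2 hb), abs_of_nonneg (sub_nonneg.2 hb), abs_of_pos (hm.trans_le hb)]
    ring
  · simp [h0, hm.trans_le ha]
    rw [max_eq_left (sub_nonneg.2 ha), abs_of_nonneg (sub_nonneg.2 ha), abs_of_pos (hm.trans_le ha)]
    ring
  · simp [hm.trans_le ha, hm.trans_le hb, ha, hb]

variable {ι : Type*} [Fintype ι] {A : Matrix ι ι ℝ} {d : ι → ℝ}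

theorem Matrix.IsHermitian.dotProduct_mulVec_le [DecidableEq ι] {M : Matrix ι ι ℝ}
    (hM : M.IsHermitian) {μ : ℝ} (hμ : ∀ ν (v : ι → ℝ), v ≠ 0 → M *ᵥ v = ν • v → ν ≤ μ)
    (y : ι → ℝ) : y ⬝ᵥ M *ᵥ y ≤ μ * (y ⬝ᵥ y) := by
  have hN : (μ • 1 - M).IsHermitian := by simpa [IsHermitian, sub_eq_add_neg] using hM
  have hpsd : (μ • 1 - M).PosSemidef := by
    refine hN.posSemidef_iff_eigenvalues_nonneg.2 fun i => ?_
    have hv := hN.mulVec_eigenvectorBasis i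
    rw [sub_mulVec, smul_mulVec, one_mulVec] at hv
    have := hμ (μ - hN.eigenvalues i) _
      ((WithLp.ofLp_eq_zero 2).ne.2 <| hN.eigenvectorBasis.orthonormal.ne_zero i)
      (by rw [sub_smul, ← hv]; abel)
    simp only [Pi.zero_apply]
    linarith
  have := hpsd.dotProduct_mulVec_nonneg y
  simp only [star_trivial, sub_mulVec, smul_mulVec, one_mulVec, dotProduct_sub,
    dotProduct_smul, smul_eq_mul] at this
  linarith

theorem mulVec_one_of_sum_eq (hA1 : ∀ i, ∑ j, A i j = d i) : A *ᵥ 1 = d :=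
  funext fun i => by simp [mulVec, dotProduct, hA1]

theorem sub_smul_one_dotProduct_mulVec (hA : A.IsSymm) (hA1 : ∀ i, ∑ j, A i j = d i)
    (x : ι → ℝ) (c : ℝ) :
    (x - c • 1) ⬝ᵥ A *ᵥ (x - c • 1) = x ⬝ᵥ A *ᵥ x - 2 * c * (d ⬝ᵥ x) + c ^ 2 * ∑ i, d i := by
  have h1 : 1 ⬝ᵥ A *ᵥ x = d ⬝ᵥ x := by
    rw [dotProduct_mulVec, ← mulVec_transpose, hA.eq, mulVec_one_of_sum_eq hA1]
  simp only [mulVec_sub, mulVec_smul, mulVec_one_of_sum_eq hA1, sub_dotProduct, dotProduct_sub,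
    smul_dotProduct, dotProduct_smul, h1, smul_eq_mul, one_dotProduct, dotProduct_comm x d]
  ring

theorem sum_sum_mul_add_mul_sq (hA : A.IsSymm) (hA1 : ∀ i, ∑ j, A i j = d i) (g : ι → ℝ)
    (t : ℝ) :
    ∑ i, ∑ j, A i j * (g i + t * g j) ^ 2 =
      (1 + t ^ 2) * ∑ i, d i * g i ^ 2 + 2 * t * ∑ i, ∑ j, A i j * (g i * g j) := by
  have hrow : ∀ i, ∑ j, A i j * g i ^ 2 = d i * g i ^ 2 := fun i => by
    rw [← sum_mul, hA1]
  have hcol : ∑ i, ∑ j, A i j * g j ^ 2 = ∑ i, d i * g i ^ 2 := by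
    rw [sum_comm, ← sum_congr rfl fun i _ => hrow i]
    exact sum_congr rfl fun i _ => sum_congr rfl fun j _ => by rw [hA.apply]
  calc ∑ i, ∑ j, A i j * (g i + t * g j) ^ 2
      = ∑ i, ∑ j, (A i j * g i ^ 2 + t ^ 2 * (A i j * g j ^ 2) + 2 * t * (A i j * (g i * g j))) :=
        sum_congr rfl fun i _ => sum_congr rfl fun j _ => by ring
    _ = _ := by
      simp only [sum_add_distrib, ← mul_sum, hrow, hcol]
      ring

theorem sq_sum_sum_mul_abs_sq_sub_sq_le (hA : A.IsSymm) (hA0 : ∀ i j, 0 ≤ A i j)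
    (hA1 : ∀ i, ∑ j, A i j = d i) (g : ι → ℝ) :
    (∑ i, ∑ j, A i j * |g i ^ 2 - g j ^ 2|) ^ 2 ≤
      4 * ((∑ i, d i * g i ^ 2) ^ 2 - (∑ i, ∑ j, A i j * (g i * g j)) ^ 2) := by
  have hCS := sum_sq_le_sum_mul_sum_of_sq_le_mul (univ : Finset (ι × ι))
    (r := fun p => A p.1 p.2 * |g p.1 ^ 2 - g p.2 ^ 2|)
    (f := fun p => A p.1 p.2 * (g p.1 + -1 * g p.2) ^ 2)
    (g := fun p => A p.1 p.2 * (g p.1 + 1 * g p.2) ^ 2)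
    (fun p _ => mul_nonneg (hA0 _ _) (sq_nonneg _)) (fun p _ => mul_nonneg (hA0 _ _) (sq_nonneg _))
    (fun p _ => le_of_eq (by rw [mul_pow, sq_abs]; ring))
  simp only [Fintype.sum_prod_type, sum_sum_mul_add_mul_sq hA hA1] at hCS
  exact hCS.trans_eq (by ring)

theorem mul_sum_sq_le_of_mulVec_eq (hA0 : ∀ i j, 0 ≤ A i j) {μ : ℝ} {F : ι → ℝ}
    (hF : A *ᵥ F = μ • (d * F)) :
    μ * ∑ i, d i * max (F i) 0 ^ 2 ≤ ∑ i, ∑ j, A i j * (max (F i) 0 * max (F j) 0) := by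
  rw [mul_sum]
  refine sum_le_sum fun i _ => ?_
  rcases le_or_gt (F i) 0 with hFi | hFi
  · rw [max_eq_right hFi]
    simp
  · have hrow : ∑ j, A i j * F j = μ * (d i * F i) := by
      simpa [mulVec, dotProduct] using congrFun hF i
    rw [max_eq_left hFi.le]
    calc μ * (d i * F i ^ 2) = F i * ∑ j, A i j * F j := by rw [hrow]; ring
      _ ≤ F i * ∑ j, A i j * max (F j) 0 :=
        mul_le_mul_of_nonneg_left (sum_le_sum fun j _ =>
          mul_le_mul_of_nonneg_left (le_max_left _ _) (hA0 i j)) hFi.le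
      _ = _ := by rw [mul_sum]; exact sum_congr rfl fun j _ => by ring

theorem exists_pos_of_dotProduct_eq_zero (hd : ∀ i, 0 < d i) {f : ι → ℝ} (hf : f ≠ 0)
    (h : d ⬝ᵥ f = 0) : ∃ i, 0 < f i := by
  by_contra! hneg
  refine hf (funext fun i => ?_)
  have := (sum_eq_zero_iff_of_nonpos fun j _ =>
    mul_nonpos_of_nonneg_of_nonpos (hd j).le (hneg j)).1 h i (mem_univ i)
  exact (mul_eq_zero.1 this).resolve_left (hd i).ne'

variable [DecidableEq ι]

def cut (A : Matrix ι ι ℝ) (S : Finset ι) : ℝ := ∑ i ∈ S, ∑ j ∈ Sᶜ, A i j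

theorem cut_compl (hA : A.IsSymm) (S : Finset ι) : cut A Sᶜ = cut A S := by
  rw [cut, cut, compl_compl]
  exact sum_comm.trans (sum_congr rfl fun i _ => sum_congr rfl fun j _ => hA.apply i j)

theorem cut_le_sum (hA0 : ∀ i j, 0 ≤ A i j) (hA1 : ∀ i, ∑ j, A i j = d i) (S : Finset ι) :
    cut A S ≤ ∑ i ∈ S, d i := by
  refine sum_le_sum fun i _ => ?_
  calc ∑ j ∈ Sᶜ, A i j ≤ ∑ j, A i j := sum_le_univ_sum_of_nonneg (hA0 i)
    _ = d i := hA1 i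

theorem sum_sum_mul_abs_ite_sub (hA : A.IsSymm) (S : Finset ι) :
    ∑ i, ∑ j, A i j * |(if i ∈ S then 1 else 0) - (if j ∈ S then 1 else 0)| = 2 * cut A S := by
  have hsplit : ∀ i j, A i j * |(if i ∈ S then 1 else 0) - (if j ∈ S then 1 else 0)| =
      (if i ∈ S then if j ∈ Sᶜ then A i j else 0 else 0) +
        (if j ∈ S then if i ∈ Sᶜ then A j i else 0 else 0) := by
    intro i j
    by_cases hi : i ∈ S <;> by_cases hj : j ∈ S <;> simp [hi, hj, hA.apply]
  have hcut : ∑ i, ∑ j, (if i ∈ S then if j ∈ Sᶜ then A i j else 0 else 0) = cut A S := by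
    rw [cut, ← Fintype.sum_ite_mem S]
    refine sum_congr rfl fun i _ => ?_
    split_ifs
    · exact Fintype.sum_ite_mem _ _
    · exact sum_const_zero
  simp only [hsplit, sum_add_distrib]
  rw [sum_comm (f := fun i j => if j ∈ S then _ else _), hcut, two_mul]

theorem sum_mul_eq_mul_sum_add_sum_mul_max_sub {w : ι → ℝ} {m : ℝ} (hm : 0 < m)
    (hw : ∀ i, w i = 0 ∨ m ≤ w i) :
    ∑ i, d i * w i = m * ∑ i ∈ {i | 0 < w i}, d i + ∑ i, d i * max (w i - m) 0 := by
  rw [← Fintype.sum_ite_mem ({i | 0 < w i} : Finset ι), mul_sum, ← sum_add_distrib]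
  refine sum_congr rfl fun i _ => ?_
  rcases hw i with h | h
  · simp [h, hm.le]
  · simp [hm.trans_le h, h]
    ring

theorem sum_sum_mul_abs_sub_eq_mul_cut_add (hA : A.IsSymm) {w : ι → ℝ} {m : ℝ} (hm : 0 < m)
    (hw : ∀ i, w i = 0 ∨ m ≤ w i) :
    ∑ i, ∑ j, A i j * |w i - w j| = m * (2 * cut A {i | 0 < w i}) +
      ∑ i, ∑ j, A i j * |max (w i - m) 0 - max (w j - m) 0| := by
  rw [← sum_sum_mul_abs_ite_sub hA, mul_sum, ← sum_add_distrib]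
  refine sum_congr rfl fun i _ => ?_
  rw [mul_sum, ← sum_add_distrib]
  refine sum_congr rfl fun j _ => ?_
  rw [abs_sub_eq_of_eq_zero_or_le hm (hw i) (hw j)]
  simp only [mem_filter, mem_univ, true_and]
  ring

/-- Discrete coarea inequality: peeling off the lowest positive level of `w` writes `w` as a
nonnegative combination of indicators of its superlevel sets. -/
theorem two_mul_mul_sum_le_sum_sum_mul_abs_sub (hA : A.IsSymm) {c : ℝ} {w : ι → ℝ} (hw : 0 ≤ w)
    (hcut : ∀ t ≥ 0, c * ∑ i ∈ {i | t < w i}, d i ≤ cut A {i | t < w i}) :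
    2 * c * ∑ i, d i * w i ≤ ∑ i, ∑ j, A i j * |w i - w j| := by
  induction hk : #{i | 0 < w i} using Nat.strong_induction_on generalizing w with
  | _ k ih =>
  set P : Finset ι := {i | 0 < w i} with hP
  obtain hPe | hPne := P.eq_empty_or_nonempty
  · have : w = 0 := funext fun i => le_antisymm (by simpa [hP] using
      (Finset.eq_empty_iff_forall_notMem.1 hPe i)) (hw i)
    simp [this]
  obtain ⟨i₀, hi₀, hwi₀⟩ := mem_image.1 (min'_mem (P.image w) (hPne.image w))
  set m := (P.image w).min' (hPne.image w)
  have hm : 0 < m := by rw [← hwi₀]; exact (mem_filter.1 hi₀).2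
  have hw_cases : ∀ i, w i = 0 ∨ m ≤ w i := fun i => (hw i).eq_or_lt.imp Eq.symm fun h =>
    min'_le _ _ (mem_image_of_mem w (by simpa [hP] using h))
  set w' : ι → ℝ := fun i => max (w i - m) 0
  have hlevel : ∀ t ≥ 0, ({i | t < w' i} : Finset ι) = ({i | t + m < w i} : Finset ι) := by
    intro t ht; ext i; simp [w', ht.not_gt, lt_sub_iff_add_lt]
  have hcard : #{i | 0 < w' i} < k := by
    rw [← hk, hlevel 0 le_rfl, zero_add]
    refine card_lt_card ⟨fun i hi => ?_, fun h => ?_⟩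
    · simp only [hP, mem_filter, mem_univ, true_and] at hi ⊢
      exact hm.trans hi
    · simpa [hwi₀] using h hi₀
  have ih' := ih _ hcard (w := w') (fun i => le_max_right _ _)
    (fun t ht => by rw [hlevel t ht]; exact hcut (t + m) (by positivity)) rfl
  have hP0 : c * ∑ i ∈ P, d i ≤ cut A P := hcut 0 le_rfl
  rw [sum_mul_eq_mul_sum_add_sum_mul_max_sub hm hw_cases,
    sum_sum_mul_abs_sub_eq_mul_cut_add hA hm hw_cases]
  nlinarith [mul_le_mul_of_nonneg_left hP0 hm.le]

theorem le_sqrt_one_sub_sq_of_forall_cut (hA : A.IsSymm) (hA0 : ∀ i j, 0 ≤ A i j)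
    (hA1 : ∀ i, ∑ j, A i j = d i) (hd : ∀ i, 0 < d i) {μ h : ℝ} (hh : 0 ≤ h) {F : ι → ℝ}
    (hF : A *ᵥ F = μ • (d * F)) (hFpos : ∃ i, 0 < F i)
    (hcut : ∀ C : Finset ι, (∀ i ∈ C, 0 < F i) → h * ∑ i ∈ C, d i ≤ cut A C) :
    μ ≤ √(1 - h ^ 2) := by
  set g : ι → ℝ := fun i => max (F i) 0
  set s := ∑ i, d i * g i ^ 2
  set W := ∑ i, ∑ j, A i j * (g i * g j)
  have hs : 0 < s := by
    obtain ⟨i, hi⟩ := hFpos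
    exact sum_pos' (fun j _ => mul_nonneg (hd j).le (sq_nonneg _))
      ⟨i, mem_univ i, mul_pos (hd i) (pow_pos (lt_max_of_lt_left hi) 2)⟩
  have hμW : μ * s ≤ W := mul_sum_sq_le_of_mulVec_eq hA0 hF
  have hsweep : 2 * h * s ≤ ∑ i, ∑ j, A i j * |g i ^ 2 - g j ^ 2| :=
    two_mul_mul_sum_le_sum_sum_mul_abs_sub hA (w := fun i => g i ^ 2)
      (fun i => sq_nonneg _) fun t ht => hcut _ fun i hi => by
        have hi : t < max (F i) 0 ^ 2 := by simpa using hi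
        by_contra hFi
        simp [max_eq_right (not_lt.1 hFi)] at hi
        linarith
  have hCS := sq_sum_sum_mul_abs_sq_sub_sq_le hA hA0 hA1 g
  have hW : W ^ 2 ≤ (1 - h ^ 2) * s ^ 2 := by
    nlinarith [pow_le_pow_left₀ (by positivity) hsweep 2]
  have hWs : W ≤ √(1 - h ^ 2) * s := by
    calc W ≤ |W| := le_abs_self W
      _ ≤ √((1 - h ^ 2) * s ^ 2) := Real.abs_le_sqrt hW
      _ = √(1 - h ^ 2) * s := by rw [Real.sqrt_mul' _ (sq_nonneg s), Real.sqrt_sq hs.le]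
  exact le_of_mul_le_mul_right (hμW.trans hWs) hs

noncomputable def normalizedModularity (A : Matrix ι ι ℝ) (d : ι → ℝ) : Matrix ι ι ℝ :=
  diagonal (fun i => (√(d i))⁻¹) * A * diagonal (fun i => (√(d i))⁻¹) -
    (1 / ∑ i, d i) • vecMulVec (fun i => √(d i)) (fun i => √(d i))

theorem isHermitian_normalizedModularity (hA : A.IsSymm) :
    (normalizedModularity A d).IsHermitian := by
  simp [IsHermitian, normalizedModularity, transpose_mul, hA.eq, Matrix.mul_assoc,
    transpose_vecMulVec]

theorem normalizedModularity_mulVec (hd : ∀ i, 0 < d i) (x : ι → ℝ) :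
    normalizedModularity A d *ᵥ (fun i => √(d i) * x i) =
      fun i => (√(d i))⁻¹ * (A *ᵥ x) i - (d ⬝ᵥ x) / (∑ j, d j) * √(d i) := by
  have hx : diagonal (fun i => (√(d i))⁻¹) *ᵥ (fun i => √(d i) * x i) = x := by
    ext i; simp [mulVec_diagonal, (Real.sqrt_pos.2 (hd i)).ne']
  have hδ : (fun i => √(d i)) ⬝ᵥ (fun i => √(d i) * x i) = d ⬝ᵥ x := by
    simp only [dotProduct, ← mul_assoc, Real.mul_self_sqrt (hd _).le]
  ext i
  simp only [normalizedModularity, sub_mulVec, smul_mulVec, ← mulVec_mulVec, hx,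
    vecMulVec_mulVec, hδ]
  simp only [Pi.sub_apply, Pi.smul_apply, mulVec_diagonal, op_smul_eq_mul, smul_eq_mul]
  ring

theorem normalizedModularity_mulVec_sqrt [Nonempty ι] (hA1 : ∀ i, ∑ j, A i j = d i)
    (hd : ∀ i, 0 < d i) : normalizedModularity A d *ᵥ (fun i => √(d i)) = 0 := by
  have h := normalizedModularity_mulVec (A := A) hd 1
  simp only [Pi.one_apply, mul_one, mulVec_one_of_sum_eq hA1, dotProduct_one] at h
  rw [h, div_self (sum_pos (fun i _ => hd i) univ_nonempty).ne']
  ext i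
  simp [inv_mul_eq_div, Real.div_sqrt]

theorem sqrt_mul_dotProduct_normalizedModularity_mulVec (hd : ∀ i, 0 < d i) (x : ι → ℝ) :
    (fun i => √(d i) * x i) ⬝ᵥ normalizedModularity A d *ᵥ (fun i => √(d i) * x i) =
      x ⬝ᵥ A *ᵥ x - (d ⬝ᵥ x) ^ 2 / ∑ i, d i := by
  rw [normalizedModularity_mulVec hd]
  have hterm : ∀ i, √(d i) * x i * ((√(d i))⁻¹ * (A *ᵥ x) i - (d ⬝ᵥ x) / (∑ j, d j) * √(d i)) =
      x i * (A *ᵥ x) i - (d ⬝ᵥ x) / (∑ j, d j) * (d i * x i) := by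
    intro i
    have := (Real.sqrt_pos.2 (hd i)).ne'
    field_simp
    rw [Real.sq_sqrt (hd i).le]
    ring
  calc _ = ∑ i, (x i * (A *ᵥ x) i - (d ⬝ᵥ x) / (∑ j, d j) * (d i * x i)) :=
        sum_congr rfl fun i _ => hterm i
    _ = _ := by
      rw [sum_sub_distrib, ← mul_sum]
      simp only [dotProduct]
      ring

theorem dotProduct_mulVec_sub_sq_div_sum_le [Nonempty ι] (hA : A.IsSymm)
    (hA1 : ∀ i, ∑ j, A i j = d i) (hd : ∀ i, 0 < d i) {μ : ℝ}
    (hμ : ∀ ν (v : ι → ℝ), v ≠ 0 → normalizedModularity A d *ᵥ v = ν • v → ν ≤ μ) (x : ι → ℝ) :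
    x ⬝ᵥ A *ᵥ x - (d ⬝ᵥ x) ^ 2 / ∑ i, d i ≤
      μ * (∑ i, d i * x i ^ 2 - (d ⬝ᵥ x) ^ 2 / ∑ i, d i) := by
  have hvol : 0 < ∑ i, d i := sum_pos (fun i _ => hd i) univ_nonempty
  set c := d ⬝ᵥ x / ∑ i, d i
  have hdy : d ⬝ᵥ (x - c • 1) = 0 := by
    simp only [dotProduct_sub, dotProduct_smul, dotProduct_one, smul_eq_mul, c]
    field_simp
    ring
  have hyy : (fun i => √(d i) * (x - c • 1) i) ⬝ᵥ (fun i => √(d i) * (x - c • 1) i) =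
      ∑ i, d i * x i ^ 2 - 2 * c * (d ⬝ᵥ x) + c ^ 2 * ∑ i, d i := by
    simp only [dotProduct, Pi.sub_apply, Pi.smul_apply, Pi.one_apply, smul_eq_mul, mul_one]
    rw [mul_sum, mul_sum, ← sum_sub_distrib, ← sum_add_distrib]
    refine sum_congr rfl fun i _ => ?_
    linear_combination (x i - c) ^ 2 * Real.mul_self_sqrt (hd i).le
  have key := (isHermitian_normalizedModularity hA).dotProduct_mulVec_le hμ
    (fun i => √(d i) * (x - c • 1) i)
  rw [sqrt_mul_dotProduct_normalizedModularity_mulVec hd, hdy, hyy,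
    sub_smul_one_dotProduct_mulVec hA hA1] at key
  have hc : (d ⬝ᵥ x) ^ 2 / ∑ i, d i = 2 * c * (d ⬝ᵥ x) - c ^ 2 * ∑ i, d i := by
    simp only [c]
    field_simp
    ring
  rw [hc]
  convert key using 1 <;> ring

theorem exists_eigenvector_of_normalizedModularity (hA : A.IsSymm)
    (hA1 : ∀ i, ∑ j, A i j = d i) (hd : ∀ i, 0 < d i) {μ : ℝ} (hμ : μ ≠ 0) {v : ι → ℝ}
    (hv : v ≠ 0) (hNv : normalizedModularity A d *ᵥ v = μ • v) :
    ∃ f : ι → ℝ, f ≠ 0 ∧ d ⬝ᵥ f = 0 ∧ A *ᵥ f = μ • (d * f) := by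
  have hsqrt : ∀ i, √(d i) ≠ 0 := fun i => (Real.sqrt_pos.2 (hd i)).ne'
  have : Nonempty ι := by
    obtain ⟨i, -⟩ := Function.ne_iff.1 hv
    exact ⟨i⟩
  have hN : (normalizedModularity A d)ᵀ = normalizedModularity A d := by
    simpa [IsHermitian] using isHermitian_normalizedModularity (d := d) hA
  have hδv : (fun i => √(d i)) ⬝ᵥ v = 0 := by
    have h := congrArg ((fun i => √(d i)) ⬝ᵥ ·) hNv
    simp only [dotProduct_mulVec, ← mulVec_transpose, hN,
      normalizedModularity_mulVec_sqrt hA1 hd, zero_dotProduct, dotProduct_smul,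
      smul_eq_mul] at h
    exact (mul_eq_zero.1 h.symm).resolve_left hμ
  set f : ι → ℝ := fun i => (√(d i))⁻¹ * v i
  have hvf : v = fun i => √(d i) * f i := funext fun i => by simp [f, hsqrt i]
  have hdf : d ⬝ᵥ f = 0 := by
    rw [← hδv, hvf]
    simp only [dotProduct, ← mul_assoc, Real.mul_self_sqrt (hd _).le]
  rw [hvf, normalizedModularity_mulVec hd, hdf] at hNv
  refine ⟨f, fun hf0 => hv (funext fun i => by simp [hvf, hf0]), hdf, funext fun i => ?_⟩
  have := congrFun hNv i
  simp only [zero_div, zero_mul, sub_zero, Pi.smul_apply, smul_eq_mul] at this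
  rw [inv_mul_eq_iff_eq_mul₀ (hsqrt i)] at this
  rw [Pi.smul_apply, Pi.mul_apply, smul_eq_mul, this]
  linear_combination μ * f i * Real.mul_self_sqrt (hd i).le

noncomputable def modularity (A : Matrix ι ι ℝ) (d : ι → ℝ) (S : Finset ι) : ℝ :=
  (∑ i ∈ S, ∑ j ∈ S, A i j) - (∑ i ∈ S, d i) ^ 2 / ∑ i, d i

noncomputable def normalizedCutModularity (A : Matrix ι ι ℝ) (d : ι → ℝ) (S : Finset ι) : ℝ :=
  modularity A d S * (∑ i, d i) / ((∑ i ∈ S, d i) * ∑ i ∈ Sᶜ, d i)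

theorem modularity_mul_sum (hA1 : ∀ i, ∑ j, A i j = d i) (hvol : ∑ i, d i ≠ 0)
    (S : Finset ι) :
    modularity A d S * ∑ i, d i = (∑ i ∈ S, d i) * (∑ i ∈ Sᶜ, d i) - cut A S * ∑ i, d i := by
  have hin : ∑ i ∈ S, ∑ j ∈ S, A i j + cut A S = ∑ i ∈ S, d i := by
    rw [cut, ← sum_add_distrib]
    exact sum_congr rfl fun i _ => by rw [sum_add_sum_compl, hA1]
  have hcompl : ∑ i ∈ Sᶜ, d i = ∑ i, d i - ∑ i ∈ S, d i := by
    rw [← sum_add_sum_compl S d]; ring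
  rw [modularity, hcompl, ← hin]
  field_simp
  ring

theorem sum_pos_of_nonempty_of_ne_univ (hd : ∀ i, 0 < d i) {S : Finset ι} (hS : S.Nonempty)
    (hS' : S ≠ univ) : 0 < ∑ i ∈ S, d i ∧ 0 < ∑ i ∈ Sᶜ, d i ∧ 0 < ∑ i, d i :=
  ⟨sum_pos (fun i _ => hd i) hS,
    sum_pos (fun i _ => hd i) (nonempty_iff_ne_empty.2 fun h => hS' ((compl_eq_empty_iff S).1 h)),
    sum_pos (fun i _ => hd i) (hS.mono (subset_univ S))⟩

theorem normalizedCutModularity_eq_one_sub (hA1 : ∀ i, ∑ j, A i j = d i) (hd : ∀ i, 0 < d i)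
    {S : Finset ι} (hS : S.Nonempty) (hS' : S ≠ univ) :
    normalizedCutModularity A d S =
      1 - cut A S * (∑ i, d i) / ((∑ i ∈ S, d i) * ∑ i ∈ Sᶜ, d i) := by
  obtain ⟨h₁, h₂, h₃⟩ := sum_pos_of_nonempty_of_ne_univ hd hS hS'
  rw [normalizedCutModularity, modularity_mul_sum hA1 h₃.ne']
  field_simp

theorem normalizedCutModularity_le_one (hA0 : ∀ i j, 0 ≤ A i j)
    (hA1 : ∀ i, ∑ j, A i j = d i) (hd : ∀ i, 0 < d i) {S : Finset ι} (hS : S.Nonempty)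
    (hS' : S ≠ univ) : normalizedCutModularity A d S ≤ 1 := by
  obtain ⟨h₁, h₂, h₃⟩ := sum_pos_of_nonempty_of_ne_univ hd hS hS'
  rw [normalizedCutModularity_eq_one_sub hA1 hd hS hS', sub_le_self_iff]
  exact div_nonneg (mul_nonneg (sum_nonneg fun i _ => sum_nonneg fun j _ => hA0 i j) h₃.le)
    (mul_pos h₁ h₂).le

theorem neg_one_le_normalizedCutModularity (hA : A.IsSymm) (hA0 : ∀ i j, 0 ≤ A i j)
    (hA1 : ∀ i, ∑ j, A i j = d i) (hd : ∀ i, 0 < d i) {S : Finset ι} (hS : S.Nonempty)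
    (hS' : S ≠ univ) : -1 ≤ normalizedCutModularity A d S := by
  obtain ⟨h₁, h₂, h₃⟩ := sum_pos_of_nonempty_of_ne_univ hd hS hS'
  have hcut₁ := cut_le_sum hA0 hA1 S
  have hcut₂ := cut_compl hA S ▸ cut_le_sum hA0 hA1 Sᶜ
  rw [normalizedCutModularity_eq_one_sub hA1 hd hS hS', ← sum_add_sum_compl S d,
    le_sub_comm, sub_neg_eq_add, div_le_iff₀ (mul_pos h₁ h₂)]
  nlinarith

theorem one_sub_div_two_mul_le_cut (hA1 : ∀ i, ∑ j, A i j = d i) (hd : ∀ i, 0 < d i)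
    {S : Finset ι} (hS : S.Nonempty) (hS' : S ≠ univ) {q : ℝ}
    (hq : normalizedCutModularity A d S ≤ q) (hq1 : q ≤ 1)
    (hhalf : 2 * ∑ i ∈ S, d i ≤ ∑ i, d i) : (1 - q) / 2 * ∑ i ∈ S, d i ≤ cut A S := by
  obtain ⟨h₁, h₂, h₃⟩ := sum_pos_of_nonempty_of_ne_univ hd hS hS'
  rw [normalizedCutModularity_eq_one_sub hA1 hd hS hS', sub_le_comm,
    le_div_iff₀ (mul_pos h₁ h₂)] at hq
  have hcompl : ∑ i, d i ≤ 2 * ∑ i ∈ Sᶜ, d i := by linarith [sum_add_sum_compl S d]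
  nlinarith [mul_le_mul_of_nonneg_left hcompl (mul_nonneg (sub_nonneg.2 hq1) h₁.le)]

theorem normalizedCutModularity_le [Nonempty ι] (hA : A.IsSymm) (hA1 : ∀ i, ∑ j, A i j = d i)
    (hd : ∀ i, 0 < d i) {μ : ℝ}
    (hμ : ∀ ν (v : ι → ℝ), v ≠ 0 → normalizedModularity A d *ᵥ v = ν • v → ν ≤ μ)
    {S : Finset ι} (hS : S.Nonempty) (hS' : S ≠ univ) : normalizedCutModularity A d S ≤ μ := by
  obtain ⟨h₁, h₂, h₃⟩ := sum_pos_of_nonempty_of_ne_univ hd hS hS'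
  have h := dotProduct_mulVec_sub_sq_div_sum_le hA hA1 hd hμ fun i => if i ∈ S then 1 else 0
  have hxAx : (fun i => if i ∈ S then 1 else 0) ⬝ᵥ A *ᵥ (fun i => if i ∈ S then 1 else 0) =
      ∑ i ∈ S, ∑ j ∈ S, A i j := by
    simp [dotProduct, mulVec, ite_mul]
  have hdx : d ⬝ᵥ (fun i => if i ∈ S then 1 else 0) = ∑ i ∈ S, d i := by simp [dotProduct]
  have hdx2 : ∑ i, d i * (if i ∈ S then 1 else 0) ^ 2 = ∑ i ∈ S, d i := by simp
  rw [hxAx, hdx, hdx2] at h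
  rw [normalizedCutModularity, div_le_iff₀ (mul_pos h₁ h₂)]
  calc modularity A d S * ∑ i, d i
      ≤ μ * (∑ i ∈ S, d i - (∑ i ∈ S, d i) ^ 2 / ∑ i, d i) * ∑ i, d i :=
        mul_le_mul_of_nonneg_right h h₃.le
    _ = μ * ((∑ i ∈ S, d i) * ∑ i ∈ Sᶜ, d i) := by
        rw [← sum_add_sum_compl S d] at h₃ ⊢
        field_simp
        ring

theorem two_mul_sum_pos_le_or (hd : ∀ i, 0 ≤ d i) (f : ι → ℝ) :
    2 * ∑ i ∈ {i | 0 < f i}, d i ≤ ∑ i, d i ∨ 2 * ∑ i ∈ {i | 0 < -f i}, d i ≤ ∑ i, d i := by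
  have hdisj : Disjoint ({i | 0 < f i} : Finset ι) ({i | 0 < -f i} : Finset ι) :=
    disjoint_filter.2 fun i _ h₁ h₂ => by linarith
  have := sum_union hdisj (f := d) ▸ sum_le_univ_sum_of_nonneg hd
  by_contra! h
  linarith

theorem one_sub_div_two_le_sqrt (hA : A.IsSymm) (hA0 : ∀ i j, 0 ≤ A i j)
    (hA1 : ∀ i, ∑ j, A i j = d i) (hd : ∀ i, 0 < d i) {μ q : ℝ} (hμ : 0 < μ)
    (hq : ∀ S : Finset ι, S.Nonempty → S ≠ univ → normalizedCutModularity A d S ≤ q)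
    (hq1 : q ≤ 1) {f : ι → ℝ} (hf : f ≠ 0) (hdf : d ⬝ᵥ f = 0) (hAf : A *ᵥ f = μ • (d * f))
    (hhalf : 2 * ∑ i ∈ {i | 0 < f i}, d i ≤ ∑ i, d i) :
    (1 - q) / 2 ≤ √(1 - μ ^ 2) := by
  obtain ⟨j, hj⟩ := exists_pos_of_dotProduct_eq_zero hd (neg_ne_zero.2 hf) (by simp [hdf])
  have hcut : ∀ C : Finset ι, (∀ i ∈ C, 0 < f i) → (1 - q) / 2 * ∑ i ∈ C, d i ≤ cut A C := by
    intro C hC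
    obtain rfl | hCne := C.eq_empty_or_nonempty
    · simp [cut]
    have hCu : C ≠ univ := fun h => (hC j (h ▸ mem_univ j)).not_gt (neg_pos.1 hj)
    refine one_sub_div_two_mul_le_cut hA1 hd hCne hCu (hq C hCne hCu) hq1 ?_
    have hsub : ∑ i ∈ C, d i ≤ ∑ i ∈ {i | 0 < f i}, d i :=
      sum_le_sum_of_subset_of_nonneg (fun i hi => by simpa using hC i hi) fun i _ _ => (hd i).le
    linarith
  exact le_sqrt_one_sub_sq_of_le_sqrt_one_sub_sq hμ <| le_sqrt_one_sub_sq_of_forall_cut hA hA0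
    hA1 hd (by linarith) hAf (exists_pos_of_dotProduct_eq_zero hd hf hdf) hcut

theorem one_sub_two_mul_sqrt_le (hA : A.IsSymm) (hA0 : ∀ i j, 0 ≤ A i j)
    (hA1 : ∀ i, ∑ j, A i j = d i) (hd : ∀ i, 0 < d i) {μ₁ q : ℝ}
    (hμ₁ : IsGreatest {μ | ∃ v : ι → ℝ, v ≠ 0 ∧ normalizedModularity A d *ᵥ v = μ • v} μ₁)
    (hq : IsGreatest {q | ∃ S : Finset ι, S.Nonempty ∧ S ≠ univ ∧
      q = normalizedCutModularity A d S} q) :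
    1 - 2 * √(1 - μ₁ ^ 2) ≤ q := by
  obtain ⟨S₀, hS₀, hS₀', rfl⟩ := hq.1
  have : Nonempty ι := ⟨hS₀.choose⟩
  have hq1 := normalizedCutModularity_le_one hA0 hA1 hd hS₀ hS₀'
  have hμ₀ : 0 ≤ μ₁ := hμ₁.2 ⟨fun i => √(d i), fun h => (Real.sqrt_pos.2 (hd hS₀.choose)).ne'
    (congrFun h _), by rw [normalizedModularity_mulVec_sqrt hA1 hd, zero_smul]⟩
  obtain hμ0 | hμpos := hμ₀.eq_or_lt
  · rw [← hμ0]
    norm_num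
    linarith [neg_one_le_normalizedCutModularity hA hA0 hA1 hd hS₀ hS₀']
  obtain ⟨v, hv, hNv⟩ := hμ₁.1
  obtain ⟨f, hf, hdf, hAf⟩ :=
    exists_eigenvector_of_normalizedModularity hA hA1 hd hμpos.ne' hv hNv
  have hmax : ∀ S : Finset ι, S.Nonempty → S ≠ univ →
      normalizedCutModularity A d S ≤ normalizedCutModularity A d S₀ :=
    fun S hS hS' => hq.2 ⟨S, hS, hS', rfl⟩
  obtain hhalf | hhalf := two_mul_sum_pos_le_or (fun i => (hd i).le) f
  · linarith [one_sub_div_two_le_sqrt hA hA0 hA1 hd hμpos hmax hq1 hf hdf hAf hhalf]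
  · linarith [one_sub_div_two_le_sqrt hA hA0 hA1 hd hμpos hmax hq1 (neg_ne_zero.2 hf)
      (by simp [hdf]) (by rw [mulVec_neg, hAf, mul_neg, smul_neg]) hhalf]

theorem le_of_isGreatest_normalizedCutModularity (hA : A.IsSymm) (hA1 : ∀ i, ∑ j, A i j = d i)
    (hd : ∀ i, 0 < d i) {μ₁ q : ℝ}
    (hμ₁ : IsGreatest {μ | ∃ v : ι → ℝ, v ≠ 0 ∧ normalizedModularity A d *ᵥ v = μ • v} μ₁)
    (hq : IsGreatest {q | ∃ S : Finset ι, S.Nonempty ∧ S ≠ univ ∧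
      q = normalizedCutModularity A d S} q) :
    q ≤ μ₁ := by
  obtain ⟨S, hS, hS', rfl⟩ := hq.1
  have : Nonempty ι := ⟨hS.choose⟩
  exact normalizedCutModularity_le hA hA1 hd (fun ν v hv hNv => hμ₁.2 ⟨v, hv, hNv⟩) hS hS'

theorem cheeger_type_inequality_for_normalized_cut_modularity_general
    {n : ℕ} (G : SimpleGraph (Fin n)) [DecidableRel G.Adj]
    (hconn : G.Connected)
    (A : Matrix (Fin n) (Fin n) ℝ) (hA : A = G.adjMatrix ℝ)
    (d : Fin n → ℝ) (hd : d = fun i => ∑ j, A i j)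
    (vol : ℝ) (hvol : vol = ∑ i, d i)
    (δ : Fin n → ℝ) (hδ : δ = fun i => Real.sqrt (d i))
    (NM : Matrix (Fin n) (Fin n) ℝ)
    (hNM : NM = diagonal (fun i => (Real.sqrt (d i))⁻¹) * A *
                diagonal (fun i => (Real.sqrt (d i))⁻¹) - (1 / vol) • vecMulVec δ δ)
    (μ₁ : ℝ)
    (hμ₁ : IsGreatest {μ : ℝ | ∃ v : Fin n → ℝ, v ≠ 0 ∧ NM.mulVec v = μ • v} μ₁)
    (Q : Finset (Fin n) → ℝ)
    (hQ : ∀ S, Q S = (∑ i ∈ S, ∑ j ∈ S, A i j) - (∑ i ∈ S, d i) ^ 2 / vol)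
    (qN : ℝ)
    (hqN : IsGreatest {q : ℝ | ∃ S : Finset (Fin n), S.Nonempty ∧ S ≠ univ ∧
            q = Q S * vol / ((∑ i ∈ S, d i) * (∑ i ∈ Sᶜ, d i))} qN) :
    1 - 2 * Real.sqrt (1 - μ₁ ^ 2) ≤ qN ∧ qN ≤ μ₁ := by
  obtain ⟨S, ⟨i, hi⟩, hS', -⟩ := hqN.1
  obtain ⟨j, hj⟩ : ∃ j, j ∉ S := by simpa [eq_univ_iff_forall] using hS'
  have : Nontrivial (Fin n) := ⟨⟨i, j, by rintro rfl; exact hj hi⟩⟩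
  obtain rfl : Q = _ := funext hQ
  subst hA hNM hδ hvol hd
  have hA0 : ∀ i j, 0 ≤ G.adjMatrix ℝ i j := fun i j => by
    rw [SimpleGraph.adjMatrix_apply]; split_ifs <;> norm_num
  have hdeg : ∀ i, 0 < ∑ j, G.adjMatrix ℝ i j := fun i => by
    have := G.adjMatrix_mulVec_const_apply (α := ℝ) (a := 1) (v := i)
    simp only [mulVec, dotProduct, Function.const_apply, mul_one] at this
    rw [this]
    exact_mod_cast hconn.preconnected.degree_pos_of_nontrivial i
  exact ⟨one_sub_two_mul_sqrt_le G.isSymm_adjMatrix hA0 (fun _ => rfl) hdeg hμ₁ hqN,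
    le_of_isGreatest_normalizedCutModularity G.isSymm_adjMatrix (fun _ => rfl) hdeg hμ₁ hqN⟩

/-- Cheeger-type inequality: If `G` is not a star and `μ₁` is the
rightmost eigenvalue of the normalized modularity matrix `𝓜`, then
`1 - 2√(1 - μ₁²) ≤ q_G^{NCut} ≤ μ₁`. -/
theorem cheeger_type_inequality_for_normalized_cut_modularity
    {n : ℕ} (hn : 0 < n) (G : SimpleGraph (Fin n)) [DecidableRel G.Adj]
    (hconn : G.Connected)
    (hnotstar : ¬ (2 ≤ n ∧
      ∃ c : Fin n, ∀ i j : Fin n, G.Adj i j ↔ (i ≠ j ∧ (i = c ∨ j = c))))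
    (A : Matrix (Fin n) (Fin n) ℝ) (hA : A = G.adjMatrix ℝ)
    (d : Fin n → ℝ) (hd : d = fun i => ∑ j, A i j)
    (vol : ℝ) (hvol : vol = ∑ i, d i)
    (δ : Fin n → ℝ) (hδ : δ = fun i => Real.sqrt (d i))
    (NM : Matrix (Fin n) (Fin n) ℝ)
    (hNM : NM = diagonal (fun i => (Real.sqrt (d i))⁻¹) * A *
                diagonal (fun i => (Real.sqrt (d i))⁻¹) - (1 / vol) • vecMulVec δ δ)
    (μ₁ : ℝ)
    (hμ₁ : IsGreatest {μ : ℝ | ∃ v : Fin n → ℝ, v ≠ 0 ∧ NM.mulVec v = μ • v} μ₁)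
    (Q : Finset (Fin n) → ℝ)
    (hQ : ∀ S, Q S = (∑ i ∈ S, ∑ j ∈ S, A i j) - (∑ i ∈ S, d i) ^ 2 / vol)
    (qN : ℝ)
    (hqN : IsGreatest {q : ℝ | ∃ S : Finset (Fin n), S.Nonempty ∧ S ≠ univ ∧
            q = Q S * vol / ((∑ i ∈ S, d i) * (∑ i ∈ Sᶜ, d i))} qN) :
    1 - 2 * Real.sqrt (1 - μ₁ ^ 2) ≤ qN ∧ qN ≤ μ₁ :=
  cheeger_type_inequality_for_normalized_cut_modularity_general G hconn A hA d hd vol hvol δ hδ NM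
    hNM μ₁ hμ₁ Q hQ qN hqN
end

section
/- Let G be a finite simple connected graph and let v be an eigenvector of the normalized modularity matrix 𝓜 corresponding to its rightmost eigenvalue μ₁, with all entries of z = D^{-1/2}v nonzero. Let S = { i : v_i ≥ 0 }, c = Σ_{i∈S} d_i z_i, p = c/vol S, q = -c/vol S̄, and let x = p𝟙_S + q𝟙_{S̄}. Suppose r ≥ 1 is such that r^{-1} ≤ z_i/x_i ≤ r for all i. Then 1 - μ₁ ≥ (1 - q_G^{NCut})/(4r⁴); equivalently, 1 - 4r⁴(1 - μ₁) ≤ q_G^{NCut}. -/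
open Matrix Finset

/-!
Write `z = D^{-1/2} v`. The eigen-equation `𝓜 v = μ₁ v` says `A z = μ₁ D z + (dᵀz / vol V) d`, so the
Dirichlet form `½ Σᵢⱼ Aᵢⱼ (zᵢ - zⱼ)²` equals `(1 - μ₁) Σ dᵢzᵢ² - (dᵀz)² / vol V ≤ (1 - μ₁) Σ dᵢzᵢ²`.
The ratio condition pins `z` between `x / r` and `r x`, where `x` is the step vector of `S`. Every edge
leaving `S` contributes at least `((p - q) / r)²` to the Dirichlet form, while `Σ dᵢzᵢ² ≤ r² Σ dᵢxᵢ²`,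
and `Σ dᵢxᵢ² = (p - q)² vol S vol S̄ / vol V` because `dᵀx = 0`. Together these bound the normalized
cut of `S` by `r⁴ (1 - μ₁)`, and the normalized cut-modularity of `S` is one minus its normalized cut.
If `S = V`, summing the eigen-equation forces `μ₁ = 0`, and any normalized cut-modularity is `≥ -1`.
-/

namespace Modularity

variable {ι : Type*} [Fintype ι] {A : Matrix ι ι ℝ} {d z : ι → ℝ} {μ : ℝ}

/-- The eigen-equation `𝓜 v = μ v` of the normalized modularity matrix, written for
`z = D^{-1/2} v`. -/
def EigenEquation (A : Matrix ι ι ℝ) (d : ι → ℝ) (μ : ℝ) (z : ι → ℝ) : Prop :=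
  ∀ i, ∑ j, A i j * z j = μ * (d i * z i) + d i * (∑ j, d j * z j) / ∑ j, d j

theorem col_sum_eq_of_isSymm (hA : A.IsSymm) (hd : ∀ i, ∑ j, A i j = d i) (j : ι) :
    ∑ i, A i j = d j := by
  rw [← hd j]
  exact sum_congr rfl fun i _ => hA.apply j i

theorem EigenEquation.eq_zero_of_forall_pos [Nonempty ι] (heig : EigenEquation A d μ z)
    (hA : A.IsSymm) (hd : ∀ i, ∑ j, A i j = d i) (hdpos : ∀ i, 0 < d i) (hz : ∀ i, 0 < z i) :
    μ = 0 := by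
  have h : ∑ i, ∑ j, A i j * z j = ∑ i, (μ * (d i * z i) + d i * (∑ j, d j * z j) / ∑ j, d j) :=
    sum_congr rfl fun i _ => heig i
  rw [sum_comm] at h
  simp_rw [← sum_mul, col_sum_eq_of_isSymm hA hd] at h
  rw [sum_add_distrib, ← mul_sum, ← sum_div, ← sum_mul,
    mul_div_cancel_left₀ _ (sum_pos (fun i _ => hdpos i) univ_nonempty).ne'] at h
  have hpos : 0 < ∑ i, d i * z i := sum_pos (fun i _ => mul_pos (hdpos i) (hz i)) univ_nonempty
  nlinarith

theorem EigenEquation.sum_sum_mul_sub_sq (heig : EigenEquation A d μ z) (hA : A.IsSymm)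
    (hd : ∀ i, ∑ j, A i j = d i) :
    ∑ i, ∑ j, A i j * (z i - z j) ^ 2 =
      2 * ((1 - μ) * ∑ i, d i * z i ^ 2 - (∑ i, d i * z i) ^ 2 / ∑ i, d i) := by
  have hrow : ∑ i, ∑ j, A i j * z i ^ 2 = ∑ i, d i * z i ^ 2 := by simp_rw [← sum_mul, hd]
  have hcol : ∑ i, ∑ j, A i j * z j ^ 2 = ∑ i, d i * z i ^ 2 := by
    rw [sum_comm]; simp_rw [← sum_mul, col_sum_eq_of_isSymm hA hd]
  have hcross : ∑ i, z i * ∑ j, A i j * z j =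
      μ * ∑ i, d i * z i ^ 2 + (∑ i, d i * z i) ^ 2 / ∑ i, d i := by
    calc ∑ i, z i * ∑ j, A i j * z j
        = ∑ i, (μ * (d i * z i ^ 2) + d i * z i * ((∑ j, d j * z j) / ∑ j, d j)) :=
          sum_congr rfl fun i _ => by rw [heig]; ring
      _ = _ := by rw [sum_add_distrib, ← mul_sum, ← sum_mul]; ring
  calc ∑ i, ∑ j, A i j * (z i - z j) ^ 2
      = ∑ i, ∑ j, A i j * z i ^ 2 + ∑ i, ∑ j, A i j * z j ^ 2 -
          2 * ∑ i, z i * ∑ j, A i j * z j := by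
        simp only [mul_sum, ← sum_add_distrib, ← sum_sub_distrib]
        exact sum_congr rfl fun i _ => sum_congr rfl fun j _ => by ring
    _ = _ := by rw [hrow, hcol, hcross]; ring

theorem sq_le_mul_sq_of_div_le {x y r : ℝ} (h₀ : 0 < y / x) (h : y / x ≤ r) :
    y ^ 2 ≤ (r * x) ^ 2 := by
  have hx : x ≠ 0 := (div_ne_zero_iff.1 h₀.ne').2
  calc y ^ 2 = (y / x) ^ 2 * x ^ 2 := by field_simp
    _ ≤ r ^ 2 * x ^ 2 := by gcongr
    _ = (r * x) ^ 2 := by ring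

theorem ne_zero_of_inv_le_div {x y r : ℝ} (hr : 0 < r) (h : r⁻¹ ≤ y / x) : x ≠ 0 := by
  rintro rfl
  simp only [div_zero, inv_nonpos] at h
  linarith

theorem bounds_of_ratio_of_pos {x y r : ℝ} (hr : 0 < r) (hx : 0 < x)
    (h : r⁻¹ ≤ y / x ∧ y / x ≤ r) : x / r ≤ y ∧ y ^ 2 ≤ (r * x) ^ 2 :=
  ⟨div_eq_inv_mul x r ▸ (le_div_iff₀ hx).1 h.1,
    sq_le_mul_sq_of_div_le ((inv_pos.2 hr).trans_le h.1) h.2⟩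

theorem bounds_of_ratio_of_neg {x y r : ℝ} (hr : 0 < r) (hx : x < 0)
    (h : r⁻¹ ≤ y / x ∧ y / x ≤ r) : y ≤ x / r ∧ y ^ 2 ≤ (r * x) ^ 2 :=
  ⟨div_eq_inv_mul x r ▸ (le_div_iff_of_neg hx).1 h.1,
    sq_le_mul_sq_of_div_le ((inv_pos.2 hr).trans_le h.1) h.2⟩

variable [DecidableEq ι]

theorem eigenEquation_of_mulVec_eq (hdpos : ∀ i, 0 < d i) {v : ι → ℝ}
    (hv : (diagonal (fun i => (√(d i))⁻¹) * A * diagonal (fun i => (√(d i))⁻¹) -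
        (1 / ∑ i, d i) • vecMulVec (fun i => √(d i)) (fun i => √(d i))) *ᵥ v = μ • v) :
    EigenEquation A d μ fun i => v i / √(d i) := by
  intro i
  set z : ι → ℝ := fun j => v j / √(d j)
  have hsq (j : ι) : √(d j) * √(d j) = d j := Real.mul_self_sqrt (hdpos j).le
  have hs (j : ι) : √(d j) ≠ 0 := (Real.sqrt_pos.2 (hdpos j)).ne'
  have hvz : v = fun j => √(d j) * z j := funext fun j => (mul_div_cancel₀ _ (hs j)).symm
  have hw : diagonal (fun i => (√(d i))⁻¹) *ᵥ v = z := by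
    ext j; rw [hvz, mulVec_diagonal, inv_mul_cancel_left₀ (hs j)]
  have hdot : (fun i => √(d i)) ⬝ᵥ v = ∑ j, d j * z j := by
    simp only [hvz, dotProduct, ← mul_assoc, hsq]
  rw [sub_mulVec, ← mulVec_mulVec, ← mulVec_mulVec, hw, smul_mulVec, vecMulVec_mulVec, hdot] at hv
  have hi := congrFun hv i
  rw [hvz] at hi
  simp only [Pi.sub_apply, Pi.smul_apply, mulVec_diagonal, smul_eq_mul,
    MulOpposite.smul_eq_mul_unop, MulOpposite.unop_op] at hi
  change (A *ᵥ z) i = _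
  linear_combination √(d i) * hi - (A *ᵥ z) i * mul_inv_cancel₀ (hs i) +
    (μ * z i + (∑ j, d j * z j) / ∑ j, d j) * hsq i

def cut (A : Matrix ι ι ℝ) (S : Finset ι) : ℝ := ∑ i ∈ S, ∑ j ∈ Sᶜ, A i j

noncomputable def normalizedCut (A : Matrix ι ι ℝ) (d : ι → ℝ) (S : Finset ι) : ℝ :=
  cut A S * (∑ i, d i) / ((∑ i ∈ S, d i) * ∑ i ∈ Sᶜ, d i)

noncomputable def normalizedCutModularity (A : Matrix ι ι ℝ) (d : ι → ℝ) (S : Finset ι) : ℝ :=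
  (∑ i ∈ S, ∑ j ∈ S, A i j - (∑ i ∈ S, d i) ^ 2 / ∑ i, d i) * (∑ i, d i) /
    ((∑ i ∈ S, d i) * ∑ i ∈ Sᶜ, d i)

theorem cut_nonneg (hA0 : ∀ i j, 0 ≤ A i j) (S : Finset ι) : 0 ≤ cut A S :=
  sum_nonneg fun i _ => sum_nonneg fun j _ => hA0 i j

theorem cut_compl (hA : A.IsSymm) (S : Finset ι) : cut A Sᶜ = cut A S := by
  rw [cut, cut, compl_compl]
  exact sum_comm.trans (sum_congr rfl fun i _ => sum_congr rfl fun j _ => hA.apply i j)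

theorem cut_le_sum (hA0 : ∀ i j, 0 ≤ A i j) (hd : ∀ i, ∑ j, A i j = d i) (S : Finset ι) :
    cut A S ≤ ∑ i ∈ S, d i :=
  sum_le_sum fun i _ => hd i ▸ sum_le_univ_sum_of_nonneg fun j => hA0 i j

theorem sum_sum_eq_sub_cut (hd : ∀ i, ∑ j, A i j = d i) (S : Finset ι) :
    ∑ i ∈ S, ∑ j ∈ S, A i j = ∑ i ∈ S, d i - cut A S := by
  rw [cut, eq_sub_iff_add_eq, ← sum_add_distrib]
  exact sum_congr rfl fun i _ => by rw [sum_add_sum_compl, hd]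

section NormalizedCut

variable {S : Finset ι}

theorem normalizedCutModularity_eq (hd : ∀ i, ∑ j, A i j = d i) (hdpos : ∀ i, 0 < d i)
    (hS : S.Nonempty) (hSc : Sᶜ.Nonempty) :
    normalizedCutModularity A d S = 1 - normalizedCut A d S := by
  have ha : 0 < ∑ i ∈ S, d i := sum_pos (fun i _ => hdpos i) hS
  have hb : 0 < ∑ i ∈ Sᶜ, d i := sum_pos (fun i _ => hdpos i) hSc
  rw [normalizedCutModularity, normalizedCut, sum_sum_eq_sub_cut hd, ← sum_add_sum_compl S d]
  field_simp
  ring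

theorem normalizedCut_mem_Icc (hA : A.IsSymm) (hA0 : ∀ i j, 0 ≤ A i j)
    (hd : ∀ i, ∑ j, A i j = d i) (hdpos : ∀ i, 0 < d i) (hS : S.Nonempty) (hSc : Sᶜ.Nonempty) :
    normalizedCut A d S ∈ Set.Icc 0 2 := by
  have ha : 0 < ∑ i ∈ S, d i := sum_pos (fun i _ => hdpos i) hS
  have hb : 0 < ∑ i ∈ Sᶜ, d i := sum_pos (fun i _ => hdpos i) hSc
  have h₀ := cut_nonneg hA0 S
  have h₁ := cut_le_sum hA0 hd S
  have h₂ := cut_compl hA S ▸ cut_le_sum hA0 hd Sᶜ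
  rw [normalizedCut, Set.mem_Icc, div_le_iff₀ (by positivity), ← sum_add_sum_compl S d]
  exact ⟨by positivity, by nlinarith⟩

theorem two_mul_cut_mul_sq_le (hA : A.IsSymm) (hA0 : ∀ i j, 0 ≤ A i j) {a b : ℝ}
    (hab : b ≤ a) (ha : ∀ i ∈ S, a ≤ z i) (hb : ∀ i ∉ S, z i ≤ b) :
    2 * (cut A S * (a - b) ^ 2) ≤ ∑ i, ∑ j, A i j * (z i - z j) ^ 2 := by
  have hf0 (i j : ι) : 0 ≤ A i j * (z i - z j) ^ 2 := mul_nonneg (hA0 i j) (sq_nonneg _)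
  have hswap : ∑ i ∈ Sᶜ, ∑ j ∈ S, A i j * (z i - z j) ^ 2 =
      ∑ i ∈ S, ∑ j ∈ Sᶜ, A i j * (z i - z j) ^ 2 :=
    sum_comm.trans <| sum_congr rfl fun i _ => sum_congr rfl fun j _ => by rw [hA.apply i j]; ring
  have hcut : cut A S * (a - b) ^ 2 ≤ ∑ i ∈ S, ∑ j ∈ Sᶜ, A i j * (z i - z j) ^ 2 := by
    rw [cut, sum_mul]
    refine sum_le_sum fun i hi => ?_
    rw [sum_mul]
    refine sum_le_sum fun j hj => mul_le_mul_of_nonneg_left ?_ (hA0 i j)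
    exact pow_le_pow_left₀ (sub_nonneg.2 hab) (by linarith [ha i hi, hb j (mem_compl.1 hj)]) 2
  calc 2 * (cut A S * (a - b) ^ 2)
      ≤ ∑ i ∈ S, ∑ j ∈ Sᶜ, A i j * (z i - z j) ^ 2 +
          ∑ i ∈ Sᶜ, ∑ j ∈ S, A i j * (z i - z j) ^ 2 := by linarith
    _ ≤ ∑ i ∈ S, ∑ j, A i j * (z i - z j) ^ 2 + ∑ i ∈ Sᶜ, ∑ j, A i j * (z i - z j) ^ 2 :=
      add_le_add (sum_le_sum fun i _ => sum_le_univ_sum_of_nonneg (hf0 i))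
        (sum_le_sum fun i _ => sum_le_univ_sum_of_nonneg (hf0 i))
    _ = _ := sum_add_sum_compl S _

theorem EigenEquation.normalizedCut_le (heig : EigenEquation A d μ z) (hA : A.IsSymm)
    (hA0 : ∀ i j, 0 ≤ A i j) (hd : ∀ i, ∑ j, A i j = d i) (hdpos : ∀ i, 0 < d i)
    (hS : S.Nonempty) (hSc : Sᶜ.Nonempty) {p q r : ℝ} (hr : 0 < r) (hp : 0 < p) (hq : q < 0)
    (hpq : p * ∑ i ∈ S, d i + q * ∑ i ∈ Sᶜ, d i = 0)
    (hzS : ∀ i ∈ S, p / r ≤ z i ∧ z i ^ 2 ≤ (r * p) ^ 2)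
    (hzSc : ∀ i ∉ S, z i ≤ q / r ∧ z i ^ 2 ≤ (r * q) ^ 2) :
    normalizedCut A d S ≤ r ^ 4 * (1 - μ) := by
  set a := ∑ i ∈ S, d i
  set b := ∑ i ∈ Sᶜ, d i
  have ha : 0 < a := sum_pos (fun i _ => hdpos i) hS
  have hb : 0 < b := sum_pos (fun i _ => hdpos i) hSc
  have hvol : ∑ i, d i = a + b := (sum_add_sum_compl S d).symm
  have hcut := two_mul_cut_mul_sq_le hA hA0 (div_le_div_of_nonneg_right (hq.trans hp).le hr.le)
    (fun i hi => (hzS i hi).1) (fun i hi => (hzSc i hi).1)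
  rw [heig.sum_sum_mul_sub_sq hA hd] at hcut
  have hmean : 0 ≤ (∑ i, d i * z i) ^ 2 / ∑ i, d i :=
    div_nonneg (sq_nonneg _) (hvol ▸ by positivity)
  have hrayleigh : ∑ i, d i * z i ^ 2 ≤ r ^ 2 * (p ^ 2 * a + q ^ 2 * b) := by
    calc ∑ i, d i * z i ^ 2 = ∑ i ∈ S, d i * z i ^ 2 + ∑ i ∈ Sᶜ, d i * z i ^ 2 :=
          (sum_add_sum_compl S _).symm
      _ ≤ ∑ i ∈ S, d i * (r * p) ^ 2 + ∑ i ∈ Sᶜ, d i * (r * q) ^ 2 :=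
          add_le_add (sum_le_sum fun i hi => mul_le_mul_of_nonneg_left (hzS i hi).2 (hdpos i).le)
            (sum_le_sum fun i hi =>
              mul_le_mul_of_nonneg_left (hzSc i (mem_compl.1 hi)).2 (hdpos i).le)
      _ = r ^ 2 * (p ^ 2 * a + q ^ 2 * b) := by rw [← sum_mul, ← sum_mul]; ring
  have hpos : 0 < ∑ i, d i * z i ^ 2 := by
    obtain ⟨i, hi⟩ := hS
    have hzi : 0 < z i := (div_pos hp hr).trans_le (hzS i hi).1
    exact sum_pos' (fun j _ => mul_nonneg (hdpos j).le (sq_nonneg _))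
      ⟨i, mem_univ i, mul_pos (hdpos i) (pow_pos hzi 2)⟩
  have hC : cut A S * (p / r - q / r) ^ 2 ≤ (1 - μ) * ∑ i, d i * z i ^ 2 := by linarith
  have hμ : 0 ≤ 1 - μ :=
    nonneg_of_mul_nonneg_left (hC.trans' (mul_nonneg (cut_nonneg hA0 S) (sq_nonneg _))) hpos
  -- `(p²a + q²b)(a + b) = (p - q)² ab + (pa + qb)²`
  have key : cut A S * (a + b) * (p - q) ^ 2 ≤ r ^ 4 * (1 - μ) * (a * b) * (p - q) ^ 2 :=
    calc cut A S * (a + b) * (p - q) ^ 2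
        = r ^ 2 * (cut A S * (p / r - q / r) ^ 2) * (a + b) := by field_simp
      _ ≤ r ^ 2 * ((1 - μ) * (r ^ 2 * (p ^ 2 * a + q ^ 2 * b))) * (a + b) := by
          gcongr r ^ 2 * ?_ * _; exact hC.trans (mul_le_mul_of_nonneg_left hrayleigh hμ)
      _ = r ^ 4 * (1 - μ) * (a * b) * (p - q) ^ 2 := by
          linear_combination r ^ 4 * (1 - μ) * (p * a + q * b) * hpq
  rw [normalizedCut, hvol, div_le_iff₀ (mul_pos ha hb)]
  exact le_of_mul_le_mul_right key (pow_pos (sub_pos.2 (hq.trans hp)) 2)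

theorem EigenEquation.normalizedCut_le_of_ratio (heig : EigenEquation A d μ z) (hA : A.IsSymm)
    (hA0 : ∀ i j, 0 ≤ A i j) (hd : ∀ i, ∑ j, A i j = d i) (hdpos : ∀ i, 0 < d i)
    (hS : S.Nonempty) (hSc : Sᶜ.Nonempty) {c r : ℝ} (hc : 0 < c) (hr : 0 < r)
    (hrz : ∀ i, r⁻¹ ≤ z i / (if i ∈ S then c / ∑ i ∈ S, d i else -c / ∑ i ∈ Sᶜ, d i) ∧
      z i / (if i ∈ S then c / ∑ i ∈ S, d i else -c / ∑ i ∈ Sᶜ, d i) ≤ r) :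
    normalizedCut A d S ≤ r ^ 4 * (1 - μ) := by
  have ha : 0 < ∑ i ∈ S, d i := sum_pos (fun i _ => hdpos i) hS
  have hb : 0 < ∑ i ∈ Sᶜ, d i := sum_pos (fun i _ => hdpos i) hSc
  refine heig.normalizedCut_le hA hA0 hd hdpos hS hSc hr (div_pos hc ha)
    (div_neg_of_neg_of_pos (neg_neg_of_pos hc) hb) (by field_simp; ring)
    (fun i hi => bounds_of_ratio_of_pos hr (div_pos hc ha) ?_)
    (fun i hi => bounds_of_ratio_of_neg hr (div_neg_of_neg_of_pos (neg_neg_of_pos hc) hb) ?_)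
  · simpa [hi] using hrz i
  · simpa [hi] using hrz i

end NormalizedCut

end Modularity

open Modularity

theorem improved_cheeger_lower_bound_general
    {n : ℕ} (G : SimpleGraph (Fin n)) [DecidableRel G.Adj]
    (A : Matrix (Fin n) (Fin n) ℝ) (hA : A = G.adjMatrix ℝ)
    (d : Fin n → ℝ) (hd : d = fun i => ∑ j, A i j)
    (vol : ℝ) (hvol : vol = ∑ i, d i)
    (δ : Fin n → ℝ) (hδ : δ = fun i => Real.sqrt (d i))
    (NM : Matrix (Fin n) (Fin n) ℝ)
    (hNM : NM = diagonal (fun i => (Real.sqrt (d i))⁻¹) * A *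
                diagonal (fun i => (Real.sqrt (d i))⁻¹) - (1 / vol) • vecMulVec δ δ)
    (μ₁ : ℝ)
    (v : Fin n → ℝ) (hvev : NM.mulVec v = μ₁ • v)
    (z : Fin n → ℝ) (hz : z = fun i => v i / Real.sqrt (d i))
    (hznz : ∀ i, z i ≠ 0)
    (S : Finset (Fin n)) (hS : S = univ.filter (fun i => 0 ≤ v i))
    (c : ℝ) (hc : c = ∑ i ∈ S, d i * z i)
    (p q : ℝ) (hp : p = c / ∑ i ∈ S, d i) (hq : q = -c / ∑ i ∈ Sᶜ, d i)
    (x : Fin n → ℝ) (hx : x = fun i => if i ∈ S then p else q)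
    (r : ℝ) (hr : 1 ≤ r)
    (hrz : ∀ i, r⁻¹ ≤ z i / x i ∧ z i / x i ≤ r)
    (Q : Finset (Fin n) → ℝ)
    (hQ : ∀ T, Q T = (∑ i ∈ T, ∑ j ∈ T, A i j) - (∑ i ∈ T, d i) ^ 2 / vol)
    (qN : ℝ)
    (hqN : IsGreatest {t : ℝ | ∃ T : Finset (Fin n), T.Nonempty ∧ T ≠ univ ∧
            t = Q T * vol / ((∑ i ∈ T, d i) * (∑ i ∈ Tᶜ, d i))} qN) :
    (1 - qN) / (4 * r ^ 4) ≤ 1 - μ₁ := by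
  subst hvol hδ hx hp hq
  have hsymm : A.IsSymm := hA ▸ G.isSymm_adjMatrix
  have hA0 (i j) : 0 ≤ A i j := by rw [hA, SimpleGraph.adjMatrix_apply]; split_ifs <;> norm_num
  have hdeg (i) : ∑ j, A i j = d i := by rw [hd]
  have hzv (i) : z i = v i / √(d i) := by rw [hz]
  have hdpos (i) : 0 < d i :=
    (hdeg i ▸ sum_nonneg fun j _ => hA0 i j).lt_of_ne' fun h => hznz i (by simp [hzv, h])
  have heig : EigenEquation A d μ₁ z := hz ▸ eigenEquation_of_mulVec_eq hdpos (hNM ▸ hvev)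
  have hzS (i) (hi : i ∈ S) : 0 < z i := by
    have hvi : 0 ≤ v i := by simpa [hS] using hi
    exact (hzv i ▸ div_nonneg hvi (Real.sqrt_nonneg _)).lt_of_ne' (hznz i)
  obtain ⟨T, hT, hTu, hqT⟩ := hqN.1
  have hTc : Tᶜ.Nonempty := by simpa [nonempty_iff_ne_empty] using hTu
  replace hqT : qN = 1 - normalizedCut A d T := by
    rw [hqT, hQ]; exact normalizedCutModularity_eq hdeg hdpos hT hTc
  have hTcut := normalizedCut_mem_Icc hsymm hA0 hdeg hdpos hT hTc
  suffices 1 - qN ≤ 4 * r ^ 4 * (1 - μ₁) by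
    rw [div_le_iff₀ (by positivity)]; linarith
  by_cases hSu : S = univ
  · have : Nonempty (Fin n) := hT.to_subtype.map (↑)
    rw [heig.eq_zero_of_forall_pos hsymm hdeg hdpos fun i => hzS i (hSu ▸ mem_univ i)]
    linarith [one_le_pow₀ (n := 4) hr, hTcut.2]
  have hSc : Sᶜ.Nonempty := by simpa [nonempty_iff_ne_empty] using hSu
  have hr0 : 0 < r := by linarith
  -- for `c = 0` the step vector `x` vanishes, which the ratio condition rules out
  have hc0 : c ≠ 0 := by
    obtain ⟨i, hi⟩ := hSc
    have hx0 := ne_zero_of_inv_le_div hr0 (hrz i).1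
    simp only [mem_compl.1 hi, if_false, div_ne_zero_iff, neg_ne_zero] at hx0
    exact hx0.1
  have hcpos : 0 < c :=
    (hc ▸ sum_nonneg fun j hj => (mul_pos (hdpos j) (hzS j hj)).le).lt_of_ne' hc0
  have hSne : S.Nonempty := nonempty_of_sum_ne_zero (hc ▸ hc0)
  have hcut := heig.normalizedCut_le_of_ratio hsymm hA0 hdeg hdpos hSne hSc hcpos hr0 hrz
  have hmem : 1 - normalizedCut A d S ≤ qN := hqN.2 ⟨S, hSne, hSu, by
    rw [hQ]; exact (normalizedCutModularity_eq hdeg hdpos hSne hSc).symm⟩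
  linarith [hTcut.1]

/-- Let `v` be an eigenvector of the normalized modularity matrix `𝓜`
for its rightmost eigenvalue `μ₁`, with all entries of `z = D^{-1/2}v` nonzero. Let
`S = {i : v_i ≥ 0}`, `c = Σ_{i∈S} d_i z_i`, `p = c/vol S`, `q = -c/vol S̄`,
`x = p𝟙_S + q𝟙_{S̄}`, and let `r ≥ 1` satisfy `r⁻¹ ≤ z_i/x_i ≤ r` for all `i`. Then
`1 - μ₁ ≥ (1 - q_G^{NCut})/(4r⁴)`. -/
theorem improved_cheeger_lower_bound
    {n : ℕ} (hn : 0 < n) (G : SimpleGraph (Fin n)) [DecidableRel G.Adj]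
    (hconn : G.Connected)
    (A : Matrix (Fin n) (Fin n) ℝ) (hA : A = G.adjMatrix ℝ)
    (d : Fin n → ℝ) (hd : d = fun i => ∑ j, A i j)
    (vol : ℝ) (hvol : vol = ∑ i, d i)
    (δ : Fin n → ℝ) (hδ : δ = fun i => Real.sqrt (d i))
    (NM : Matrix (Fin n) (Fin n) ℝ)
    (hNM : NM = diagonal (fun i => (Real.sqrt (d i))⁻¹) * A *
                diagonal (fun i => (Real.sqrt (d i))⁻¹) - (1 / vol) • vecMulVec δ δ)
    (μ₁ : ℝ)
    (hμ₁ : IsGreatest {μ : ℝ | ∃ w : Fin n → ℝ, w ≠ 0 ∧ NM.mulVec w = μ • w} μ₁)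
    (v : Fin n → ℝ) (hv : v ≠ 0) (hvev : NM.mulVec v = μ₁ • v)
    (z : Fin n → ℝ) (hz : z = fun i => v i / Real.sqrt (d i))
    (hznz : ∀ i, z i ≠ 0)
    (S : Finset (Fin n)) (hS : S = univ.filter (fun i => 0 ≤ v i))
    (c : ℝ) (hc : c = ∑ i ∈ S, d i * z i)
    (p q : ℝ) (hp : p = c / ∑ i ∈ S, d i) (hq : q = -c / ∑ i ∈ Sᶜ, d i)
    (x : Fin n → ℝ) (hx : x = fun i => if i ∈ S then p else q)
    (r : ℝ) (hr : 1 ≤ r)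
    (hrz : ∀ i, r⁻¹ ≤ z i / x i ∧ z i / x i ≤ r)
    (Q : Finset (Fin n) → ℝ)
    (hQ : ∀ T, Q T = (∑ i ∈ T, ∑ j ∈ T, A i j) - (∑ i ∈ T, d i) ^ 2 / vol)
    (qN : ℝ)
    (hqN : IsGreatest {t : ℝ | ∃ T : Finset (Fin n), T.Nonempty ∧ T ≠ univ ∧
            t = Q T * vol / ((∑ i ∈ T, d i) * (∑ i ∈ Tᶜ, d i))} qN) :
    (1 - qN) / (4 * r ^ 4) ≤ 1 - μ₁ :=
  improved_cheeger_lower_bound_general G A hA d hd vol hvol δ hδ NM hNM μ₁ v hvev z hz hznz S hS c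
    hc p q hp hq x hx r hr hrz Q hQ qN hqN
end
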